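/- arXiv:2210.14247 — 3 statements merged into one kernel-verified Lean document; each statement's English description precedes it below -/
import Mathlib

section
/- For all X, Y ∈ evC and every matrix composition a over M_d: ⟨SS(δ(X ⊠ Y)), a⟩ = Σ_{(b,c): diag(b,c)=a} ⟨SS(δX), b⟩ · ⟨SS(δY), c⟩, the sum ranging over all pairs of matrix compositions (b,c) with diag(b,c) = a. -/
open scoped Classical

namespace TwoParam

/-! ### The free commutative monoid on `d` generators, written additively -/

abbrev Md (d : ℕ) := Fin d →₀ ℕ

/-! ### Raw matrices over `Md d` and matrix compositions

A raw matrix is a function `ℕ → ℕ → Md d` together with a number of rows and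
columns, normalized to be `0` (= the neutral element `ε`) outside the range.
The empty composition is the `0 × 0` matrix. -/

structure RawMat (d : ℕ) where
  rows : ℕ
  cols : ℕ
  entry : ℕ → ℕ → Md d
  entry_eq_zero : ∀ i j : ℕ, rows ≤ i ∨ cols ≤ j → entry i j = 0

namespace RawMat

variable {d : ℕ}

/-- A matrix composition: no row and no column consists entirely of `ε`.
(The empty `0 × 0` matrix vacuously satisfies this.) -/
def IsComp (a : RawMat d) : Prop :=
  (∀ i < a.rows, ∃ j < a.cols, a.entry i j ≠ 0) ∧
  (∀ j < a.cols, ∃ i < a.rows, a.entry i j ≠ 0)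

/-- The empty composition. -/
def empty (d : ℕ) : RawMat d := ⟨0, 0, fun _ _ => 0, fun _ _ _ => rfl⟩

/-- Diagonal block concatenation of two matrices. -/
def diag (a b : RawMat d) : RawMat d where
  rows := a.rows + b.rows
  cols := a.cols + b.cols
  entry := fun i j =>
    if i < a.rows ∧ j < a.cols then a.entry i j
    else if a.rows ≤ i ∧ a.cols ≤ j then b.entry (i - a.rows) (j - a.cols)
    else 0
  entry_eq_zero := by
    intro i j h
    try dsimp only
    split_ifs with h1 h2
    · exact absurd h (by omega)
    · exact b.entry_eq_zero _ _ (by omega)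
    · rfl

/-- A non-empty composition is connected if it admits no nontrivial
block-diagonal decomposition into compositions. -/
def Connected (a : RawMat d) : Prop :=
  a.IsComp ∧ a ≠ empty d ∧
    ∀ b c : RawMat d, b.IsComp → c.IsComp → a = b.diag c →
      b = empty d ∨ c = empty d

/-- Total weight of a matrix: the homomorphism `Md d → ℕ` sending every
generator to `1`, summed over all entries. -/
def weight (a : RawMat d) : ℕ :=
  ∑ i ∈ Finset.range a.rows, ∑ j ∈ Finset.range a.cols,
    (a.entry i j).sum fun _ e => e

end RawMat

/-! ### Evaluation of monomials -/

/-- For `z ∈ R^d` and `m ∈ Md d`, the evaluation `z^(m) = ∏ j, z j ^ m j`. -/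
def evalMon {d : ℕ} {R : Type*} [CommRing R] (z : Fin d → R) (m : Md d) : R :=
  m.prod fun j e => z j ^ e

/-! ### Two-parameter sums signature -/

/-- Strictly increasing chains of length `m` with values in `[lo, hi)`
(0-based indexing of the data). -/
noncomputable def chainsB (m lo hi : ℕ) : Finset (Fin m → ℕ) :=
  (Fintype.piFinset fun _ : Fin m => Finset.Ico lo hi).filter StrictMono

/-- The bounded two-parameter sums signature coefficient `⟨SS_{l;r}(Z), a⟩`. -/
noncomputable def SSb {d : ℕ} {R : Type*} [CommRing R]
    (Z : ℕ × ℕ → Fin d → R) (l r : ℕ × ℕ) (a : RawMat d) : R :=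
  ∑ ι ∈ chainsB a.rows l.1 r.1, ∑ κ ∈ chainsB a.cols l.2 r.2,
    ∏ s : Fin a.rows, ∏ t : Fin a.cols, evalMon (Z (ι s, κ t)) (a.entry s t)

/-- The (unbounded) two-parameter sums signature coefficient `⟨SS(Z), a⟩`,
for finitely supported `Z` a finite sum. -/
noncomputable def SSc {d : ℕ} {R : Type*} [CommRing R]
    (Z : ℕ × ℕ → Fin d → R) (a : RawMat d) : R :=
  ∑ᶠ ι ∈ {f : Fin a.rows → ℕ | StrictMono f},
    ∑ᶠ κ ∈ {g : Fin a.cols → ℕ | StrictMono g},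
      ∏ s : Fin a.rows, ∏ t : Fin a.cols, evalMon (Z (ι s, κ t)) (a.entry s t)

/-! ### Quasi-shuffle surjections -/

/-- `qShSet m s j`: surjections `{1,…,m+s} ↠ {1,…,j}` that are strictly
increasing on the first `m` and on the last `s` arguments. -/
noncomputable def qShSet (m s j : ℕ) : Finset (Fin (m + s) → Fin j) :=
  Finset.univ.filter fun q =>
    Function.Surjective q ∧
    (∀ u v : Fin (m + s), u < v → (v : ℕ) < m → q u < q v) ∧
    (∀ u v : Fin (m + s), u < v → m ≤ (u : ℕ) → q u < q v)

/-- The summand `c^{p,q}` of the two-parameter quasi-shuffle: the `j × k`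
matrix with entries `⋆_{u ∈ p⁻¹(x), v ∈ q⁻¹(y)} diag(a,b)_{u,v}`. -/
noncomputable def qshMat {d : ℕ} (a b : RawMat d) {j k : ℕ}
    (p : Fin (a.rows + b.rows) → Fin j) (q : Fin (a.cols + b.cols) → Fin k) :
    RawMat d where
  rows := j
  cols := k
  entry := fun x y =>
    if hx : x < j then
      if hy : y < k then
        ∑ u ∈ Finset.univ.filter (fun u => p u = ⟨x, hx⟩),
          ∑ v ∈ Finset.univ.filter (fun v => q v = ⟨y, hy⟩),
            (a.diag b).entry u v
      else 0
    else 0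
  entry_eq_zero := by
    intro x y h
    try dsimp only
    split_ifs with hx hy
    · exact absurd h (by omega)
    · rfl
    · rfl

/-- The two-parameter quasi-shuffle `a ⧢ b`, as an element of the free
`R`-module on matrices.  (The empty index sets for `j` or `k` outside
`[0, rows+rows]` resp. `[0, cols+cols]` implement the conventions
`e ⧢ a = a ⧢ e = a` and `e ⧢ e = e`.) -/
noncomputable def qsh {d : ℕ} (R : Type*) [CommRing R] (a b : RawMat d) :
    RawMat d →₀ R :=
  ∑ j ∈ Finset.range (a.rows + b.rows + 1),
    ∑ k ∈ Finset.range (a.cols + b.cols + 1),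
      ∑ p ∈ qShSet a.rows b.rows j,
        ∑ q ∈ qShSet a.cols b.cols k,
          Finsupp.single (qshMat a b p q) 1

/-- Bilinear extension of the quasi-shuffle to the free module. -/
noncomputable def qshL {d : ℕ} {R : Type*} [CommRing R]
    (F G : RawMat d →₀ R) : RawMat d →₀ R :=
  F.sum fun a ra => G.sum fun b rb => (ra * rb) • qsh R a b

/-! ### Two-parameter data: eventually zero / eventually constant functions -/

variable {V : Type*}

/-- Eventually zero two-parameter data: finite support. -/
def EvZ [Zero V] (X : ℕ × ℕ → V) : Prop := (Function.support X).Finite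

/-- Eventually constant two-parameter data: there is a box outside of which
`X` is constant; i.e. whenever two values differ, one of the two indices lies
in the box. -/
def EvC (X : ℕ × ℕ → V) : Prop :=
  ∃ n : ℕ × ℕ, ∀ i j : ℕ × ℕ, X i ≠ X j →
    (i.1 ≤ n.1 ∧ i.2 ≤ n.2) ∨ (j.1 ≤ n.1 ∧ j.2 ≤ n.2)

/-- The coordinate of `i` along the axis `a` (axis `0` = rows, `1` = cols). -/
def axC (a : Fin 2) (i : ℕ × ℕ) : ℕ := if a = 0 then i.1 else i.2

/-- Shift an index one step down along the axis `a`. -/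
def shiftD (a : Fin 2) (i : ℕ × ℕ) : ℕ × ℕ :=
  if a = 0 then (i.1 - 1, i.2) else (i.1, i.2 - 1)

/-- The zero insertion operator (0-based position `k`): insert a zero
row/column at position `k` along axis `a`. -/
def zeroIns [Zero V] (a : Fin 2) (k : ℕ) (X : ℕ × ℕ → V) : ℕ × ℕ → V :=
  fun i => if axC a i < k then X i else if axC a i = k then 0 else X (shiftD a i)

/-- The warping operator (0-based position `k`): duplicate the row/column at
position `k` along axis `a`. -/
def warp (a : Fin 2) (k : ℕ) (X : ℕ × ℕ → V) : ℕ × ℕ → V :=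
  fun i => if axC a i ≤ k then X i else X (shiftD a i)

/-- The two-parameter (forward) difference operator `δ`. -/
def diffOp [AddCommGroup V] (X : ℕ × ℕ → V) : ℕ × ℕ → V := fun i =>
  X (i.1 + 1, i.2 + 1) - X (i.1 + 1, i.2) - X (i.1, i.2 + 1) + X (i.1, i.2)

/-- The summation operator `ς`, a right inverse of `δ`:
`(ς Z)_{i,j} = Σ_{s ≥ i} Σ_{t ≥ j} Z_{s,t}`. -/
noncomputable def sigmaOp [AddCommMonoid V] (Z : ℕ × ℕ → V) : ℕ × ℕ → V :=
  fun i => ∑ᶠ p ∈ {p : ℕ × ℕ | i.1 ≤ p.1 ∧ i.2 ≤ p.2}, Z p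

/-- The set of all `n ∈ ℕ²` such that `X` is determined inside the
`n.1 × n.2` upper-left box (0-based size/count convention). -/
def sizeSetC (X : ℕ × ℕ → V) : Set (ℕ × ℕ) :=
  {n | ∀ i j : ℕ × ℕ, X i ≠ X j →
    (i.1 < n.1 ∧ i.2 < n.2) ∨ (j.1 < n.1 ∧ j.2 < n.2)}

/-- `rows(X)` for eventually constant `X`: first component of the least
element of `sizeSetC X`. -/
noncomputable def rowsC (X : ℕ × ℕ → V) : ℕ := sInf (Prod.fst '' sizeSetC X)

/-- `cols(X)` for eventually constant `X`. -/
noncomputable def colsC (X : ℕ × ℕ → V) : ℕ := sInf (Prod.snd '' sizeSetC X)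

/-- `rows(Z)` for eventually zero `Z`, defined via the support. -/
noncomputable def rowsZ [Zero V] (Z : ℕ × ℕ → V) : ℕ :=
  sInf {m : ℕ | ∀ i : ℕ × ℕ, Z i ≠ 0 → i.1 < m}

/-- `cols(Z)` for eventually zero `Z`, defined via the support. -/
noncomputable def colsZ [Zero V] (Z : ℕ × ℕ → V) : ℕ :=
  sInf {m : ℕ | ∀ i : ℕ × ℕ, Z i ≠ 0 → i.2 < m}

/-- Diagonal concatenation `A ⊘ B` on eventually zero functions,
with `rows`/`cols` taken in the eventually-constant sense. -/
noncomputable def dconc [AddCommGroup V] (A B : ℕ × ℕ → V) : ℕ × ℕ → V :=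
  A + (zeroIns 0 0)^[rowsC A] ((zeroIns 1 0)^[colsC A] B)

/-- Diagonal concatenation `A ⊘ B` on eventually zero functions,
with `rows`/`cols` taken in the support sense. -/
noncomputable def dconcZ [AddCommGroup V] (A B : ℕ × ℕ → V) : ℕ × ℕ → V :=
  A + (zeroIns 0 0)^[rowsZ A] ((zeroIns 1 0)^[colsZ A] B)

/-- Concatenation along the diagonal `X ⊠ Y` on eventually constant
functions: `ς(δX) + Warp_{1,1}^{rows X}(Warp_{2,1}^{cols X}(Y))`. -/
noncomputable def bconc [AddCommGroup V] (X Y : ℕ × ℕ → V) : ℕ × ℕ → V :=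
  sigmaOp (diffOp X) + (warp 0 0)^[rowsC X] ((warp 1 0)^[colsC X] Y)


/-! ### Two-parameter quasisymmetric functions -/

/-- Monomials in the commuting variables `x_{i,j}`, `(i,j) ∈ ℕ × ℕ`. -/
abbrev Mon := (ℕ × ℕ) →₀ ℕ

/-- Total degree of a monomial. -/
def mdeg (m : Mon) : ℕ := m.sum fun _ e => e

/-- A formal power series (given by its coefficient function) has finite
total degree. -/
def FinDeg {R : Type*} [Zero R] (f : Mon → R) : Prop :=
  ∃ D : ℕ, ∀ m : Mon, f m ≠ 0 → mdeg m ≤ D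

/-- `ℕ₀`-valued raw matrices, normalized to vanish outside the range. -/
structure NMat where
  rows : ℕ
  cols : ℕ
  entry : ℕ → ℕ → ℕ
  entry_eq_zero : ∀ i j : ℕ, rows ≤ i ∨ cols ≤ j → entry i j = 0

namespace NMat

/-- An `ℕ₀`-matrix composition: no zero row and no zero column. -/
def IsComp (a : NMat) : Prop :=
  (∀ i < a.rows, ∃ j < a.cols, a.entry i j ≠ 0) ∧
  (∀ j < a.cols, ∃ i < a.rows, a.entry i j ≠ 0)

/-- The empty composition. -/
def empty : NMat := ⟨0, 0, fun _ _ => 0, fun _ _ _ => rfl⟩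

/-- Diagonal block concatenation. -/
def diag (a b : NMat) : NMat where
  rows := a.rows + b.rows
  cols := a.cols + b.cols
  entry := fun i j =>
    if i < a.rows ∧ j < a.cols then a.entry i j
    else if a.rows ≤ i ∧ a.cols ≤ j then b.entry (i - a.rows) (j - a.cols)
    else 0
  entry_eq_zero := by
    intro i j h
    try dsimp only
    split_ifs with h1 h2
    · exact absurd h (by omega)
    · exact b.entry_eq_zero _ _ (by omega)
    · rfl

end NMat

/-- The monomial `∏_{s,t} x_{ι_s, κ_t}^{a_{s,t}}` attached to a matrix `a`
and chains `ι`, `κ`. -/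
noncomputable def monomialOf (a : NMat) (ι : Fin a.rows → ℕ) (κ : Fin a.cols → ℕ) : Mon :=
  ∑ s : Fin a.rows, ∑ t : Fin a.cols, Finsupp.single (ι s, κ t) (a.entry s t)

/-- The monomial quasisymmetric function `M_a` (as a coefficient function):
each monomial `∏ x_{ι_s,κ_t}^{a_{s,t}}` for strictly increasing chains occurs
with coefficient `1`.  In particular `M_e = 1`. -/
noncomputable def monQ {R : Type*} [CommRing R] (a : NMat) : Mon → R := fun m =>
  if ∃ (ι : Fin a.rows → ℕ) (κ : Fin a.cols → ℕ),
      StrictMono ι ∧ StrictMono κ ∧ m = monomialOf a ι κ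
  then 1 else 0

/-- Two-parameter quasisymmetric function: finite degree, and for every
matrix composition `a` and all strictly increasing chains `ι`, `κ`, the
coefficients of `∏ x_{ι_s,κ_t}^{a_{s,t}}` and of `∏ x_{s,t}^{a_{s,t}}`
coincide. -/
def IsQSym {R : Type*} [CommRing R] (f : Mon → R) : Prop :=
  FinDeg f ∧ ∀ a : NMat, a.IsComp →
    ∀ (ι : Fin a.rows → ℕ) (κ : Fin a.cols → ℕ), StrictMono ι → StrictMono κ →
      f (monomialOf a ι κ) =
        f (monomialOf a (fun s => (s : ℕ)) (fun t => (t : ℕ)))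

/-- Product of formal power series (Cauchy product of coefficient
functions). -/
noncomputable def mulF {R : Type*} [CommRing R] (f g : Mon → R) : Mon → R :=
  fun m => ∑ p ∈ Finset.HasAntidiagonal.antidiagonal m, f p.1 * g p.2

/-- Two-parameter quasisymmetric functions form an `R`-submodule of the
module of coefficient functions. -/
noncomputable def QSymSub (R : Type*) [CommRing R] : Submodule R (Mon → R) where
  carrier := {f | IsQSym f}
  add_mem' := by
    rintro f g ⟨⟨Df, hDf⟩, hf⟩ ⟨⟨Dg, hDg⟩, hg⟩
    refine ⟨⟨max Df Dg, ?_⟩, ?_⟩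
    · intro m hm
      by_contra hc
      push_neg at hc
      have h1 : f m = 0 := by
        by_contra h
        have := hDf m h
        omega
      have h2 : g m = 0 := by
        by_contra h
        have := hDg m h
        omega
      apply hm
      show f m + g m = 0
      rw [h1, h2, add_zero]
    · intro a ha ι κ hι hκ
      show f _ + g _ = f _ + g _
      rw [hf a ha ι κ hι hκ, hg a ha ι κ hι hκ]
  zero_mem' := ⟨⟨0, fun _ hm => absurd rfl hm⟩, fun _ _ _ _ _ _ => rfl⟩
  smul_mem' := by
    rintro c f ⟨⟨Df, hDf⟩, hf⟩
    refine ⟨⟨Df, ?_⟩, ?_⟩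
    · intro m hm
      apply hDf
      intro h
      apply hm
      show c • f m = 0
      rw [h, smul_zero]
    · intro a ha ι κ hι hκ
      show c • f _ = c • f _
      rw [hf a ha ι κ hι hκ]

/-- Index shift used by the free analogue of zero insertion: indices with
coordinate `≥ k` along axis `a` are shifted up by one (axis `0` = rows). -/
def liftIdx (a : Fin 2) (k : ℕ) (i : ℕ × ℕ) : ℕ × ℕ :=
  if a = 0 then (if i.1 < k then i else (i.1 + 1, i.2))
  else (if i.2 < k then i else (i.1, i.2 + 1))

/-- The free analogue of zero insertion on formal power series: the algebra
endomorphism sending `x_i ↦ x_i` for `i_a < k`, `x_i ↦ 0` for `i_a = k` and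
`x_i ↦ x_{i - e_a}` for `i_a > k` (0-based position `k`).  On coefficient
functions it is given by precomposition with the index lift. -/
noncomputable def zeroF {R : Type*} [CommRing R] (a : Fin 2) (k : ℕ)
    (f : Mon → R) : Mon → R :=
  fun m => f (m.mapDomain (liftIdx a k))

/-- The quasi-shuffle summand `c^{p,q}` for `ℕ₀`-matrices. -/
noncomputable def nQshMat (a b : NMat) {j k : ℕ}
    (p : Fin (a.rows + b.rows) → Fin j) (q : Fin (a.cols + b.cols) → Fin k) :
    NMat where
  rows := j
  cols := k
  entry := fun x y =>
    if hx : x < j then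
      if hy : y < k then
        ∑ u ∈ Finset.univ.filter (fun u => p u = ⟨x, hx⟩),
          ∑ v ∈ Finset.univ.filter (fun v => q v = ⟨y, hy⟩),
            (a.diag b).entry u v
      else 0
    else 0
  entry_eq_zero := by
    intro x y h
    try dsimp only
    split_ifs with hx hy
    · exact absurd h (by omega)
    · rfl
    · rfl

/-- One-dimensional two-parameter sums signature coefficient `⟨SS(Z), a⟩`. -/
noncomputable def SScN {K : Type*} [CommRing K] (Z : ℕ × ℕ → K) (a : NMat) : K :=
  ∑ᶠ ι ∈ {f : Fin a.rows → ℕ | StrictMono f},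
    ∑ᶠ κ ∈ {g : Fin a.cols → ℕ | StrictMono g},
      ∏ s : Fin a.rows, ∏ t : Fin a.cols, Z (ι s, κ t) ^ a.entry s t

/-- Evaluation of a formal power series at finitely supported data. -/
noncomputable def evalSeries {K : Type*} [CommRing K] (f : Mon → K)
    (Z : ℕ × ℕ → K) : K :=
  ∑ᶠ m : Mon, f m * m.prod fun i e => Z i ^ e

end TwoParam

/-!
Warping becomes zero insertion under `δ`, and `δ ∘ ς = id` on finitely supported data, so
`δ(X ⊠ Y) = δX + translate (rows X) (cols X) (δY)`: a block-diagonal array with `δX` in the box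
`[0, rows X) × [0, cols X)`, a copy of `δY` in the opposite quadrant and zeros elsewhere.
Cutting each pair of chains `ι`, `κ` at `rows X` and `cols X` splits the signature sum into
cells indexed by cuts `(r, c)` of `a`. A cell vanishes unless the off-diagonal blocks of `a` at
`(r, c)` are `ε`, that is, unless `a = diag(b, c)`, and then it factors as
`⟨SS(δX), b⟩ · ⟨SS(δY), c⟩`.
-/

namespace TwoParam

open Finset Function

section Data

variable {V : Type*}

def BoxSupported [Zero V] (M N : ℕ) (Z : ℕ × ℕ → V) : Prop :=
  ∀ i : ℕ × ℕ, M ≤ i.1 ∨ N ≤ i.2 → Z i = 0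

lemma BoxSupported.finite_support [Zero V] {M N : ℕ} {Z : ℕ × ℕ → V}
    (hZ : BoxSupported M N Z) : (support Z).Finite := by
  refine ((Set.finite_Iio M).prod (Set.finite_Iio N)).subset fun i hi => ?_
  by_contra h
  exact hi (hZ i (by simp only [Set.mem_prod, Set.mem_Iio] at h; omega))

/-- The paper's `ZeroIns_{1,1}^M ∘ ZeroIns_{2,1}^N`. -/
def translate [Zero V] (M N : ℕ) (B : ℕ × ℕ → V) : ℕ × ℕ → V :=
  fun i => if M ≤ i.1 ∧ N ≤ i.2 then B (i.1 - M, i.2 - N) else 0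

section AddZeroClass

variable [AddZeroClass V] {A B : ℕ × ℕ → V} {M N : ℕ}

lemma add_translate_apply_of_lt {x : ℕ} (hx : x < M) (y : ℕ) :
    (A + translate M N B) (x, y) = A (x, y) := by
  simp [translate, not_le.2 hx]

lemma add_translate_apply_add (hA : BoxSupported M N A) (x y : ℕ) :
    (A + translate M N B) (x + M, y + N) = B (x, y) := by
  simp [translate, hA (x + M, y + N) (Or.inl (Nat.le_add_left M x))]

lemma add_translate_apply_of_offDiag (hA : BoxSupported M N A) {x y : ℕ}
    (h : x < M ∧ N ≤ y ∨ M ≤ x ∧ y < N) : (A + translate M N B) (x, y) = 0 := by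
  simp only [Pi.add_apply, translate, hA (x, y) (by omega), if_neg (show ¬(M ≤ x ∧ N ≤ y) by omega),
    add_zero]

lemma BoxSupported.add_translate {M' N' : ℕ} (hA : BoxSupported M N A)
    (hB : BoxSupported M' N' B) : BoxSupported (M + M') (N + N') (A + translate M N B) := by
  intro i hi
  simp only [Pi.add_apply, translate, hA i (by omega), zero_add]
  split_ifs
  · exact hB _ (by omega)
  · rfl

end AddZeroClass

lemma inf_mem_sizeSetC {X : ℕ × ℕ → V} {u v : ℕ × ℕ}
    (hu : u ∈ sizeSetC X) (hv : v ∈ sizeSetC X) :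
    (min u.1 v.1, min u.2 v.2) ∈ sizeSetC X := by
  have outside : ∀ w ∈ sizeSetC X, ∀ p q : ℕ × ℕ,
      (w.1 ≤ p.1 ∨ w.2 ≤ p.2) → (w.1 ≤ q.1 ∨ w.2 ≤ q.2) → X p = X q := by
    intro w hw p q hp hq
    by_contra hne
    rcases hw p q hne with h | h <;> omega
  -- the far corner `u + v` lies outside both boxes
  have to_corner : ∀ p : ℕ × ℕ, (min u.1 v.1 ≤ p.1 ∨ min u.2 v.2 ≤ p.2) →
      X p = X (u.1 + v.1, u.2 + v.2) := by
    intro p hp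
    by_cases hpu : u.1 ≤ p.1 ∨ u.2 ≤ p.2
    · exact outside u hu p _ hpu (Or.inl (by omega))
    · exact outside v hv p _ (by omega) (Or.inl (by omega))
  intro i j hij
  by_contra h
  exact hij ((to_corner i (by omega)).trans (to_corner j (by omega)).symm)

lemma size_mem_sizeSetC {X : ℕ × ℕ → V} (hX : EvC X) :
    (rowsC X, colsC X) ∈ sizeSetC X := by
  obtain ⟨n, hn⟩ := hX
  have hne : (sizeSetC X).Nonempty := ⟨(n.1 + 1, n.2 + 1), fun i j hij => by
    rcases hn i j hij with h | h <;> omega⟩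
  obtain ⟨u, hu, hu1⟩ := Nat.sInf_mem (hne.image Prod.fst)
  obtain ⟨v, hv, hv2⟩ := Nat.sInf_mem (hne.image Prod.snd)
  have h1 : rowsC X ≤ v.1 := Nat.sInf_le ⟨v, hv, rfl⟩
  have h2 : colsC X ≤ u.2 := Nat.sInf_le ⟨u, hu, rfl⟩
  convert inf_mem_sizeSetC hu hv using 2 <;> simp only [rowsC, colsC] at * <;> omega

lemma EvC.eq_of_size_le {X : ℕ × ℕ → V} (hX : EvC X) {p q : ℕ × ℕ}
    (hp : rowsC X ≤ p.1 ∨ colsC X ≤ p.2) (hq : rowsC X ≤ q.1 ∨ colsC X ≤ q.2) :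
    X p = X q := by
  by_contra hne
  rcases size_mem_sizeSetC hX p q hne with h | h <;> omega

lemma iterate_warp_zero (m : ℕ) (W : ℕ × ℕ → V) :
    (warp 0 0)^[m] W = fun j => W (j.1 - m, j.2) := by
  induction m with
  | zero => rfl
  | succ m ih =>
    funext ⟨j₁, j₂⟩
    rw [iterate_succ_apply', ih]
    by_cases h : j₁ = 0 <;> simp [warp, axC, shiftD, h, Nat.sub_sub, add_comm]

lemma iterate_warp_one (n : ℕ) (W : ℕ × ℕ → V) :
    (warp 1 0)^[n] W = fun j => W (j.1, j.2 - n) := by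
  induction n with
  | zero => rfl
  | succ n ih =>
    funext ⟨j₁, j₂⟩
    rw [iterate_succ_apply', ih]
    by_cases h : j₂ = 0 <;> simp [warp, axC, shiftD, h, Nat.sub_sub, add_comm]

variable [AddCommGroup V]

lemma EvC.boxSupported_diffOp {X : ℕ × ℕ → V} (hX : EvC X) :
    BoxSupported (rowsC X) (colsC X) (diffOp X) := by
  intro i hi
  have h₁ : X (i.1 + 1, i.2 + 1) = X i := hX.eq_of_size_le (by omega) hi
  have h₂ : X (i.1 + 1, i.2) = X i := hX.eq_of_size_le (by omega) hi
  have h₃ : X (i.1, i.2 + 1) = X i := hX.eq_of_size_le (by omega) hi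
  simp only [diffOp, h₁, h₂, h₃]
  abel

lemma diffOp_add (X Y : ℕ × ℕ → V) : diffOp (X + Y) = diffOp X + diffOp Y := by
  funext i
  simp only [diffOp, Pi.add_apply]
  abel

lemma sigmaOp_eq_sum {Z : ℕ × ℕ → V} (hZ : (support Z).Finite) (i : ℕ × ℕ) :
    sigmaOp Z i = ∑ p ∈ hZ.toFinset, if i.1 ≤ p.1 ∧ i.2 ≤ p.2 then Z p else 0 := by
  rw [sigmaOp, ← sum_filter, finsum_mem_eq_sum_of_inter_support_eq]
  ext p
  simp only [Set.mem_inter_iff, Set.mem_ofPred_eq, coe_filter, Set.Finite.mem_toFinset]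
  tauto

lemma diffOp_sigmaOp {Z : ℕ × ℕ → V} (hZ : (support Z).Finite) : diffOp (sigmaOp Z) = Z := by
  funext ⟨i₁, i₂⟩
  simp only [diffOp, sigmaOp_eq_sum hZ, ← sum_sub_distrib, ← sum_add_distrib]
  -- inclusion–exclusion: the four indicators cancel except at `p = (i₁, i₂)`
  rw [sum_eq_single (i₁, i₂)]
  · simp
  · rintro ⟨p₁, p₂⟩ - hp
    simp only [ne_eq, Prod.mk.injEq] at hp ⊢
    split_ifs <;> first | (exfalso; omega) | abel
  · intro h
    simp [show Z (i₁, i₂) = 0 by simpa using h]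

lemma diffOp_comp_sub (Y : ℕ × ℕ → V) (m n : ℕ) :
    diffOp (fun j => Y (j.1 - m, j.2 - n)) = translate m n (diffOp Y) := by
  funext ⟨i₁, i₂⟩
  simp only [diffOp, translate]
  split_ifs with h
  · rw [show i₁ + 1 - m = i₁ - m + 1 by omega, show i₂ + 1 - n = i₂ - n + 1 by omega]
  · rcases not_and_or.mp h with h | h
    · rw [show i₁ + 1 - m = i₁ - m by omega]; abel
    · rw [show i₂ + 1 - n = i₂ - n by omega]; abel

lemma diffOp_bconc {X : ℕ × ℕ → V} (hX : EvC X) (Y : ℕ × ℕ → V) :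
    diffOp (bconc X Y) = diffOp X + translate (rowsC X) (colsC X) (diffOp Y) := by
  rw [bconc, diffOp_add, diffOp_sigmaOp hX.boxSupported_diffOp.finite_support, iterate_warp_one,
    iterate_warp_zero, diffOp_comp_sub]

end Data

section Chains

lemma mem_chainsB {T lo hi : ℕ} {f : Fin T → ℕ} :
    f ∈ chainsB T lo hi ↔ (∀ s, lo ≤ f s ∧ f s < hi) ∧ StrictMono f := by
  simp [chainsB, Fintype.mem_piFinset]

def finAbove {T : ℕ} (r : ℕ) (s : Fin (T - r)) : Fin T := ⟨s + r, by omega⟩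

lemma prod_fin_eq_mul {β : Type*} [CommMonoid β] {T r : ℕ} (hr : r ≤ T) (f : Fin T → β) :
    ∏ s, f s = (∏ s : Fin r, f (Fin.castLE hr s)) * ∏ s : Fin (T - r), f (finAbove r s) := by
  have h : r + (T - r) = T := by omega
  rw [← (finCongr h).prod_comp, Fin.prod_univ_add]
  congr 1
  exact prod_congr rfl fun s _ => congrArg f (Fin.ext (by simp [finAbove, add_comm]))

lemma prod_prod_eq_mul_of_offDiag {β : Type*} [CommMonoid β] {T T' r c : ℕ} (hr : r ≤ T)
    (hc : c ≤ T') (e : Fin T → Fin T' → β)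
    (h : ∀ (s : Fin T) (t : Fin T'), (s : ℕ) < r ∧ c ≤ t ∨ r ≤ s ∧ (t : ℕ) < c → e s t = 1) :
    ∏ s, ∏ t, e s t =
      (∏ s : Fin r, ∏ t : Fin c, e (Fin.castLE hr s) (Fin.castLE hc t)) *
        ∏ s : Fin (T - r), ∏ t : Fin (T' - c), e (finAbove r s) (finAbove c t) := by
  rw [prod_fin_eq_mul hr]
  congr 1 <;> refine prod_congr rfl fun s _ => ?_ <;> rw [prod_fin_eq_mul hc]
  · rw [prod_eq_one fun t _ => h (Fin.castLE hr s) (finAbove c t)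
      (Or.inl ⟨s.2, by simp [finAbove]⟩), mul_one]
  · rw [prod_eq_one fun t _ => h (finAbove r s) (Fin.castLE hc t)
      (Or.inr ⟨by simp [finAbove], t.2⟩), one_mul]

def glue {T : ℕ} (m r : ℕ) (f : Fin r → ℕ) (g : Fin (T - r) → ℕ) : Fin T → ℕ :=
  fun s => if h : (s : ℕ) < r then f ⟨s, h⟩ else g ⟨s - r, by omega⟩ + m

variable {T m m' r : ℕ} {f : Fin r → ℕ} {g : Fin (T - r) → ℕ}

@[simp]
lemma glue_castLE (hr : r ≤ T) (s : Fin r) : glue m r f g (Fin.castLE hr s) = f s := by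
  simp [glue]

@[simp]
lemma glue_finAbove (s : Fin (T - r)) : glue m r f g (finAbove r s) = g s + m := by
  simp [glue, finAbove]

lemma glue_lt_iff (hf : f ∈ chainsB r 0 m) (s : Fin T) : glue m r f g s < m ↔ (s : ℕ) < r := by
  unfold glue
  split_ifs with h
  · simpa [h] using ((mem_chainsB.1 hf).1 _).2
  · simp [h]

lemma glue_mem (hr : r ≤ T) (hf : f ∈ chainsB r 0 m) (hg : g ∈ chainsB (T - r) 0 m') :
    glue m r f g ∈ chainsB T 0 (m + m') := by
  rw [mem_chainsB] at hf hg ⊢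
  refine ⟨fun s => ⟨Nat.zero_le _, ?_⟩, fun s t hst => ?_⟩
  · unfold glue
    split_ifs
    · exact lt_of_lt_of_le (hf.1 _).2 (Nat.le_add_right m m')
    · have := (hg.1 ⟨s - r, by omega⟩).2; omega
  · have hst : (s : ℕ) < t := hst
    unfold glue
    split_ifs with hs ht ht
    · exact hf.2 (Fin.mk_lt_mk.2 hst)
    · have := (hf.1 ⟨s, hs⟩).2; omega
    · omega
    · have := hg.2 (show (⟨s - r, by omega⟩ : Fin (T - r)) < ⟨t - r, by omega⟩ from
        Fin.mk_lt_mk.2 (by omega))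
      omega

def countBelow {T : ℕ} (m : ℕ) (f : Fin T → ℕ) : ℕ := #{s | f s < m}

lemma countBelow_le {f : Fin T → ℕ} : countBelow m f ≤ T :=
  (card_filter_le _ _).trans (card_fin T).le

lemma lt_countBelow_iff {f : Fin T → ℕ} (hf : StrictMono f) (s : Fin T) :
    (s : ℕ) < countBelow m f ↔ f s < m := by
  constructor
  · intro hs
    by_contra h
    have hsub : ({s' | f s' < m} : Finset (Fin T)) ⊆ Iio s := fun x hx => by
      simp only [mem_filter, mem_univ, true_and, mem_Iio] at hx ⊢
      exact hf.lt_iff_lt.1 (by omega)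
    have := card_le_card hsub
    rw [Fin.card_Iio] at this
    exact absurd hs (not_lt.2 this)
  · intro hs
    have hsub : Iic s ⊆ ({s' | f s' < m} : Finset (Fin T)) := fun x hx => by
      simp only [mem_filter, mem_univ, true_and, mem_Iic] at hx ⊢
      exact lt_of_le_of_lt (hf.monotone hx) hs
    have := card_le_card hsub
    rw [Fin.card_Iic] at this
    exact this

lemma le_apply_of_countBelow_le {f : Fin T → ℕ} (hf : StrictMono f) {s : Fin T}
    (hs : countBelow m f ≤ s) : m ≤ f s :=
  not_lt.1 fun h => absurd ((lt_countBelow_iff hf s).2 h) (not_lt.2 hs)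

lemma countBelow_glue (hr : r ≤ T) (hf : f ∈ chainsB r 0 m) :
    countBelow m (glue m r f g) = r := by
  simp only [countBelow, glue_lt_iff hf, Fin.card_filter_val_lt]
  omega

lemma sum_chainsB_add {β : Type*} [AddCommMonoid β] (F : (Fin T → ℕ) → β) :
    ∑ f ∈ chainsB T 0 (m + m'), F f =
      ∑ r ∈ range (T + 1), ∑ f ∈ chainsB r 0 m, ∑ g ∈ chainsB (T - r) 0 m', F (glue m r f g) := by
  -- group the chains by the number `r` of their values below `m`; `glue` parametrizes each group
  rw [← sum_fiberwise_of_maps_to (g := countBelow m) (t := range (T + 1))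
    (fun _ _ => mem_range.2 (Nat.lt_succ_of_le countBelow_le))]
  refine sum_congr rfl fun r hr => ?_
  have hr : r ≤ T := Nat.lt_succ_iff.1 (mem_range.1 hr)
  rw [← sum_product']
  symm
  refine sum_nbij' (fun p => glue m r p.1 p.2)
    (fun f => (fun s => f (Fin.castLE hr s), fun s => f (finAbove r s) - m))
    ?_ ?_ ?_ ?_ (fun _ _ => rfl)
  · rintro ⟨f, g⟩ hfg
    rw [mem_product] at hfg
    exact mem_filter.2 ⟨glue_mem hr hfg.1 hfg.2, countBelow_glue hr hfg.1⟩
  · intro f hf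
    obtain ⟨hmem, rfl⟩ := mem_filter.1 hf
    obtain ⟨hbound, hmono⟩ := mem_chainsB.1 hmem
    refine mem_product.2 ⟨mem_chainsB.2 ⟨fun s => ⟨Nat.zero_le _, ?_⟩, ?_⟩,
      mem_chainsB.2 ⟨fun s => ⟨Nat.zero_le _, ?_⟩, ?_⟩⟩
    · exact (lt_countBelow_iff hmono _).1 s.2
    · exact fun s t hst => hmono ((Fin.castLE_lt_castLE_iff hr).2 hst)
    · have h₁ := le_apply_of_countBelow_le (m := m) hmono (s := finAbove _ s) (by simp [finAbove])
      have h₂ := (hbound (finAbove _ s)).2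
      dsimp only
      omega
    · intro s t hst
      have h₁ := le_apply_of_countBelow_le (m := m) hmono (s := finAbove _ s) (by simp [finAbove])
      have h₂ := hmono (show finAbove (countBelow m f) s < finAbove _ t from
        Fin.mk_lt_mk.2 (by simpa using hst))
      dsimp only
      omega
  · rintro ⟨f, g⟩ -
    ext s <;> simp
  · intro f hf
    obtain ⟨hmem, rfl⟩ := mem_filter.1 hf
    funext s
    unfold glue
    split_ifs with h
    · rfl
    · have hs : finAbove (countBelow m f) ⟨s - countBelow m f, by omega⟩ = s :=
        Fin.ext (by simp only [finAbove]; omega)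
      have := le_apply_of_countBelow_le (m := m) (mem_chainsB.1 hmem).2 (not_lt.1 h)
      dsimp only
      rw [hs]
      omega

end Chains

namespace RawMat

variable {d : ℕ}

lemma ext' {a b : RawMat d} (hr : a.rows = b.rows) (hc : a.cols = b.cols)
    (he : ∀ i j, a.entry i j = b.entry i j) : a = b := by
  obtain ⟨_, _, e, _⟩ := a
  obtain ⟨_, _, e', _⟩ := b
  obtain rfl : e = e' := funext₂ he
  simp_all

lemma diag_entry (a b : RawMat d) (i j : ℕ) :
    (a.diag b).entry i j =
      if i < a.rows ∧ j < a.cols then a.entry i j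
      else if a.rows ≤ i ∧ a.cols ≤ j then b.entry (i - a.rows) (j - a.cols) else 0 :=
  rfl

def IsBlockDiag (r c : ℕ) (a : RawMat d) : Prop :=
  ∀ s < a.rows, ∀ t < a.cols, (s < r ∧ c ≤ t ∨ r ≤ s ∧ t < c) → a.entry s t = 0

def topLeft (r c : ℕ) (a : RawMat d) : RawMat d :=
  ⟨r, c, fun i j => if i < r ∧ j < c then a.entry i j else 0, fun _ _ _ => if_neg (by omega)⟩

def bottomRight (r c : ℕ) (a : RawMat d) : RawMat d :=
  ⟨a.rows - r, a.cols - c, fun i j => a.entry (i + r) (j + c),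
    fun _ _ _ => a.entry_eq_zero _ _ (by omega)⟩

lemma diag_topLeft_bottomRight {a : RawMat d} {r c : ℕ} (hr : r ≤ a.rows) (hc : c ≤ a.cols)
    (h : a.IsBlockDiag r c) : (a.topLeft r c).diag (a.bottomRight r c) = a := by
  refine ext' (by simp [diag, topLeft, bottomRight]; omega)
    (by simp [diag, topLeft, bottomRight]; omega) fun i j => ?_
  simp only [diag_entry, topLeft, bottomRight]
  split_ifs with h₁ h₂
  · rfl
  · rw [Nat.sub_add_cancel h₂.1, Nat.sub_add_cancel h₂.2]
  · by_cases hij : i < a.rows ∧ j < a.cols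
    · exact (h i hij.1 j hij.2 (by omega)).symm
    · exact (a.entry_eq_zero i j (by omega)).symm

lemma topLeft_diag (b c : RawMat d) : (b.diag c).topLeft b.rows b.cols = b := by
  refine ext' rfl rfl fun i j => ?_
  simp only [topLeft, diag_entry]
  split_ifs with h
  · rfl
  · exact (b.entry_eq_zero i j (by omega)).symm

lemma bottomRight_diag (b c : RawMat d) : (b.diag c).bottomRight b.rows b.cols = c := by
  refine ext' (by simp [diag, bottomRight]) (by simp [diag, bottomRight]) fun i j => ?_
  simp [bottomRight, diag_entry]

lemma isBlockDiag_diag (b c : RawMat d) : (b.diag c).IsBlockDiag b.rows b.cols := by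
  intro s _ t _ hst
  simp only [diag_entry]
  rw [if_neg (by omega), if_neg (by omega)]

lemma IsComp.topLeft {a : RawMat d} {r c : ℕ} (ha : a.IsComp) (hr : r ≤ a.rows)
    (hc : c ≤ a.cols) (h : a.IsBlockDiag r c) : (a.topLeft r c).IsComp := by
  constructor
  · intro i (hi : i < r)
    obtain ⟨j, hj, hne⟩ := ha.1 i (by omega)
    have hjc : j < c := by
      by_contra hjc
      exact hne (h i (by omega) j hj (by omega))
    exact ⟨j, hjc, by simpa [RawMat.topLeft, hi, hjc] using hne⟩
  · intro j (hj : j < c)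
    obtain ⟨i, hi, hne⟩ := ha.2 j (by omega)
    have hir : i < r := by
      by_contra hir
      exact hne (h i hi j (by omega) (by omega))
    exact ⟨i, hir, by simpa [RawMat.topLeft, hir, hj] using hne⟩

lemma IsComp.bottomRight {a : RawMat d} {r c : ℕ} (ha : a.IsComp) (h : a.IsBlockDiag r c) :
    (a.bottomRight r c).IsComp := by
  constructor
  · intro i (hi : i < a.rows - r)
    obtain ⟨j, hj, hne⟩ := ha.1 (i + r) (by omega)
    have hjc : c ≤ j := by
      by_contra hjc
      exact hne (h _ (by omega) j hj (by omega))
    exact ⟨j - c, show j - c < a.cols - c by omega, by simpa [RawMat.bottomRight, hjc] using hne⟩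
  · intro j (hj : j < a.cols - c)
    obtain ⟨i, hi, hne⟩ := ha.2 (j + c) (by omega)
    have hir : r ≤ i := by
      by_contra hir
      exact hne (h i hi _ (by omega) (by omega))
    exact ⟨i - r, show i - r < a.rows - r by omega, by simpa [RawMat.bottomRight, hir] using hne⟩

lemma setOf_diag_eq_image {a : RawMat d} (ha : a.IsComp) :
    {bc : RawMat d × RawMat d | bc.1.IsComp ∧ bc.2.IsComp ∧ bc.1.diag bc.2 = a} =
      (((range (a.rows + 1) ×ˢ range (a.cols + 1)).filter fun rc => a.IsBlockDiag rc.1 rc.2).image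
        fun rc => (a.topLeft rc.1 rc.2, a.bottomRight rc.1 rc.2) : Set _) := by
  ext ⟨b, c⟩
  simp only [Set.mem_ofPred_eq, coe_image, coe_filter, mem_product, mem_range, Set.mem_image,
    Prod.exists, Prod.mk.injEq]
  constructor
  · rintro ⟨-, -, rfl⟩
    exact ⟨b.rows, b.cols, ⟨⟨by simp [diag], by simp [diag]⟩, isBlockDiag_diag b c⟩,
      topLeft_diag b c, bottomRight_diag b c⟩
  · rintro ⟨r, c', ⟨⟨hr, hc⟩, h⟩, rfl, rfl⟩
    exact ⟨ha.topLeft (by omega) (by omega) h, ha.bottomRight h,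
      diag_topLeft_bottomRight (by omega) (by omega) h⟩

lemma finsum_diag_eq_sum {β : Type*} [AddCommMonoid β] {a : RawMat d} (ha : a.IsComp)
    (F : RawMat d → RawMat d → β) :
    ∑ᶠ bc ∈ {bc : RawMat d × RawMat d | bc.1.IsComp ∧ bc.2.IsComp ∧ bc.1.diag bc.2 = a},
        F bc.1 bc.2 =
      ∑ r ∈ range (a.rows + 1), ∑ c ∈ range (a.cols + 1),
        if a.IsBlockDiag r c then F (a.topLeft r c) (a.bottomRight r c) else 0 := by
  rw [setOf_diag_eq_image ha, finsum_mem_coe_finset, sum_image, sum_filter, sum_product]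
  rintro ⟨r, c⟩ - ⟨r', c'⟩ - h
  simp only [Prod.mk.injEq] at h
  exact Prod.ext (congrArg RawMat.rows h.1) (congrArg RawMat.cols h.1)

end RawMat

section Signature

variable {d : ℕ} {R : Type*} [CommRing R]

lemma evalMon_zero (z : Fin d → R) : evalMon z 0 = 1 := by
  simp [evalMon]

lemma zero_evalMon {m : Md d} (hm : m ≠ 0) : evalMon (0 : Fin d → R) m = 0 := by
  obtain ⟨j, hj⟩ := Finsupp.ne_iff.1 hm
  exact prod_eq_zero (Finsupp.mem_support_iff.2 hj) (by simp [zero_pow hj])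

def sigTerm (Z : ℕ × ℕ → Fin d → R) (a : RawMat d) (ι : Fin a.rows → ℕ) (κ : Fin a.cols → ℕ) :
    R :=
  ∏ s, ∏ t, evalMon (Z (ι s, κ t)) (a.entry s t)

variable {Z : ℕ × ℕ → Fin d → R} {a : RawMat d} {M N : ℕ}

lemma sigTerm_eq_zero (ha : a.IsComp) (hZ : BoxSupported M N Z) {ι : Fin a.rows → ℕ}
    {κ : Fin a.cols → ℕ} (h : (∃ s, M ≤ ι s) ∨ ∃ t, N ≤ κ t) : sigTerm Z a ι κ = 0 := by
  rcases h with ⟨s, hs⟩ | ⟨t, ht⟩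
  · obtain ⟨j, hj, hne⟩ := ha.1 s s.2
    refine prod_eq_zero (mem_univ s) (prod_eq_zero (mem_univ ⟨j, hj⟩) ?_)
    rw [hZ _ (Or.inl hs)]
    exact zero_evalMon hne
  · obtain ⟨i, hi, hne⟩ := ha.2 t t.2
    refine prod_eq_zero (mem_univ ⟨i, hi⟩) (prod_eq_zero (mem_univ t) ?_)
    rw [hZ _ (Or.inr ht)]
    exact zero_evalMon hne

/-- For a composition, every row and column of `a` meets the support of `Z`, so only chains
inside the box contribute. -/
lemma SSc_eq_sum_chainsB (ha : a.IsComp) (hZ : BoxSupported M N Z) :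
    SSc Z a = ∑ ι ∈ chainsB a.rows 0 M, ∑ κ ∈ chainsB a.cols 0 N, sigTerm Z a ι κ := by
  have inner : ∀ ι : Fin a.rows → ℕ,
      ∑ᶠ κ ∈ {g : Fin a.cols → ℕ | StrictMono g}, sigTerm Z a ι κ =
        ∑ κ ∈ chainsB a.cols 0 N, sigTerm Z a ι κ := by
    intro ι
    refine finsum_mem_eq_sum_of_inter_support_eq _ (Set.ext fun κ => ?_)
    simp only [Set.mem_inter_iff, Set.mem_ofPred_eq, mem_support, mem_coe, mem_chainsB]
    refine ⟨fun ⟨hκ, hne⟩ => ⟨⟨fun t => ⟨Nat.zero_le _, ?_⟩, hκ⟩, hne⟩, fun h => ⟨h.1.2, h.2⟩⟩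
    by_contra ht
    exact hne (sigTerm_eq_zero ha hZ (Or.inr ⟨t, not_lt.1 ht⟩))
  change ∑ᶠ ι ∈ _, ∑ᶠ κ ∈ _, sigTerm Z a ι κ = _
  rw [finsum_mem_congr rfl fun ι _ => inner ι]
  refine finsum_mem_eq_sum_of_inter_support_eq _ (Set.ext fun ι => ?_)
  simp only [Set.mem_inter_iff, Set.mem_ofPred_eq, mem_support, mem_coe, mem_chainsB]
  refine ⟨fun ⟨hι, hne⟩ => ⟨⟨fun s => ⟨Nat.zero_le _, ?_⟩, hι⟩, hne⟩, fun h => ⟨h.1.2, h.2⟩⟩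
  obtain ⟨κ, -, hκ⟩ := exists_ne_zero_of_sum_ne_zero hne
  by_contra hs
  exact hκ (sigTerm_eq_zero ha hZ (Or.inl ⟨s, not_lt.1 hs⟩))

variable {A B : ℕ × ℕ → Fin d → R} {M' N' r c : ℕ}
  {ι₁ : Fin r → ℕ} {ι₂ : Fin (a.rows - r) → ℕ} {κ₁ : Fin c → ℕ} {κ₂ : Fin (a.cols - c) → ℕ}

lemma sigTerm_glue_of_isBlockDiag (hA : BoxSupported M N A) (hr : r ≤ a.rows) (hc : c ≤ a.cols)
    (h : a.IsBlockDiag r c) (hι₁ : ι₁ ∈ chainsB r 0 M) :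
    sigTerm (A + translate M N B) a (glue M r ι₁ ι₂) (glue N c κ₁ κ₂) =
      sigTerm A (a.topLeft r c) ι₁ κ₁ * sigTerm B (a.bottomRight r c) ι₂ κ₂ := by
  rw [sigTerm, prod_prod_eq_mul_of_offDiag hr hc]
  · congr 1 <;> refine prod_congr rfl fun s _ => prod_congr rfl fun t _ => ?_
    · simp [add_translate_apply_of_lt ((mem_chainsB.1 hι₁).1 s).2, RawMat.topLeft]
    · simp only [glue_finAbove, add_translate_apply_add hA]
      rfl
  · intro s t hst
    rw [h s s.2 t t.2 hst, evalMon_zero]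

lemma sigTerm_glue_of_not_isBlockDiag (hA : BoxSupported M N A) (h : ¬ a.IsBlockDiag r c)
    (hι₁ : ι₁ ∈ chainsB r 0 M) (hκ₁ : κ₁ ∈ chainsB c 0 N) :
    sigTerm (A + translate M N B) a (glue M r ι₁ ι₂) (glue N c κ₁ κ₂) = 0 := by
  simp only [RawMat.IsBlockDiag, not_forall] at h
  obtain ⟨s, hs, t, ht, hst, hne⟩ := h
  refine prod_eq_zero (mem_univ ⟨s, hs⟩) (prod_eq_zero (mem_univ ⟨t, ht⟩) ?_)
  have hι := glue_lt_iff (g := ι₂) hι₁ ⟨s, hs⟩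
  have hκ := glue_lt_iff (g := κ₂) hκ₁ ⟨t, ht⟩
  rw [add_translate_apply_of_offDiag hA (by simp only at hι hκ; omega)]
  exact zero_evalMon hne

lemma sum_sigTerm_glue (hA : BoxSupported M N A) (hB : BoxSupported M' N' B) (ha : a.IsComp)
    (hr : r ≤ a.rows) (hc : c ≤ a.cols) :
    ∑ ι₁ ∈ chainsB r 0 M, ∑ ι₂ ∈ chainsB (a.rows - r) 0 M',
      ∑ κ₁ ∈ chainsB c 0 N, ∑ κ₂ ∈ chainsB (a.cols - c) 0 N',
        sigTerm (A + translate M N B) a (glue M r ι₁ ι₂) (glue N c κ₁ κ₂) =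
      if a.IsBlockDiag r c then SSc A (a.topLeft r c) * SSc B (a.bottomRight r c) else 0 := by
  split_ifs with h
  · rw [SSc_eq_sum_chainsB (ha.topLeft hr hc h) hA, SSc_eq_sum_chainsB (ha.bottomRight h) hB]
    simp_rw [sum_mul_sum]
    refine sum_congr rfl fun ι₁ hι₁ => sum_congr rfl fun ι₂ _ => sum_congr rfl fun κ₁ _ =>
      sum_congr rfl fun κ₂ _ => sigTerm_glue_of_isBlockDiag hA hr hc h hι₁
  · exact sum_eq_zero fun ι₁ hι₁ => sum_eq_zero fun ι₂ _ => sum_eq_zero fun κ₁ hκ₁ =>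
      sum_eq_zero fun κ₂ _ => sigTerm_glue_of_not_isBlockDiag hA h hι₁ hκ₁

theorem SSc_add_translate (hA : BoxSupported M N A) (hB : BoxSupported M' N' B)
    (ha : a.IsComp) :
    SSc (A + translate M N B) a =
      ∑ᶠ bc ∈ {bc : RawMat d × RawMat d | bc.1.IsComp ∧ bc.2.IsComp ∧ bc.1.diag bc.2 = a},
        SSc A bc.1 * SSc B bc.2 := by
  rw [SSc_eq_sum_chainsB ha (hA.add_translate hB), RawMat.finsum_diag_eq_sum ha
    (fun b c => SSc A b * SSc B c), sum_chainsB_add]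
  simp only [sum_chainsB_add (T := a.cols) (m := N) (m' := N')]
  refine sum_congr rfl fun r hr => ?_
  rw [← sum_congr rfl fun c hc => sum_sigTerm_glue hA hB ha (Nat.lt_succ_iff.1 (mem_range.1 hr))
    (Nat.lt_succ_iff.1 (mem_range.1 hc))]
  exact (sum_congr rfl fun _ _ => sum_comm).trans sum_comm

end Signature

end TwoParam

open TwoParam in
theorem statement15_general {d : ℕ} {R : Type*} [CommRing R]
    (X Y : ℕ × ℕ → Fin d → R) (hX : EvC X) (hY : EvC Y)
    (a : RawMat d) (ha : a.IsComp) :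
    SSc (diffOp (bconc X Y)) a =
      ∑ᶠ bc ∈ {bc : RawMat d × RawMat d |
          bc.1.IsComp ∧ bc.2.IsComp ∧ bc.1.diag bc.2 = a},
        SSc (diffOp X) bc.1 * SSc (diffOp Y) bc.2 := by
  rw [diffOp_bconc hX]
  exact SSc_add_translate hX.boxSupported_diffOp hY.boxSupported_diffOp ha

open TwoParam in
/-- Chen's identity for eventually constant functions and
concatenation along the diagonal. -/
theorem statement15 {d : ℕ} {R : Type*} [CommRing R] [IsDomain R]
    (X Y : ℕ × ℕ → Fin d → R) (hX : EvC X) (hY : EvC Y)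
    (a : RawMat d) (ha : a.IsComp) :
    SSc (diffOp (bconc X Y)) a =
      ∑ᶠ bc ∈ {bc : RawMat d × RawMat d |
          bc.1.IsComp ∧ bc.2.IsComp ∧ bc.1.diag bc.2 = a},
        SSc (diffOp X) bc.1 * SSc (diffOp Y) bc.2 :=
  statement15_general X Y hX hY a ha
end

section
/- For all ℕ₀-matrix compositions a of size m×n and b of size s×t: M_a · M_b = Σ_{j,k≥1} Σ_{p ∈ qSh(m,s;j), q ∈ qSh(n,t;k)} M_{c^{p,q}}, where c^{p,q} is the j×k matrix with entries c^{p,q}_{x,y} := Σ_{u∈p⁻¹(x), v∈q⁻¹(y)} diag(a,b)_{u,v} ∈ ℕ₀. In particular, QSym is an R-subalgebra of the R-algebra of finite-degree formal power series in the variables x_{i,j}. -/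
open scoped Classical

/-!
Write `M_a M_b` as a sum over row and column chains `(ι, κ)` for `a` and `(ι', κ')` for `b`.
A pair of strictly increasing chains `(ι, ι')` is the same thing as a quasi-shuffle
surjection `p` onto `j` points together with one chain `ρ` of length `j`: `ρ` enumerates
`range ι ∪ range ι'` and `p` records where each entry of `ι` and `ι'` sits in it. Under this
correspondence, applied to rows and to columns, the monomial of `(a; ι, κ)` times that of
`(b; ι', κ')` becomes the monomial of `(c^{p,q}; ρ, σ)`. Since a monomial determines the chains
of a composition, the coefficients on both sides count the same set.

Products of quasisymmetric functions are quasisymmetric because a strictly increasing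
relabelling of rows and columns maps the antidiagonal of a monomial bijectively onto the
antidiagonal of its image, and quasisymmetric functions are invariant under such relabellings.
-/

namespace TwoParam

open Finset

namespace NMat

lemma diag_entry (a b : NMat) (u v : ℕ) :
    (a.diag b).entry u v =
      if u < a.rows ∧ v < a.cols then a.entry u v
      else if a.rows ≤ u ∧ a.cols ≤ v then b.entry (u - a.rows) (v - a.cols) else 0 := rfl

lemma IsComp.diag {a b : NMat} (ha : a.IsComp) (hb : b.IsComp) : (a.diag b).IsComp := by
  refine ⟨fun u hu => ?_, fun v hv => ?_⟩
  · by_cases hua : u < a.rows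
    · obtain ⟨v, hv, hne⟩ := ha.1 u hua
      exact ⟨v, by simp [NMat.diag]; omega, by simpa [diag_entry, hua, hv] using hne⟩
    · obtain ⟨v, hv, hne⟩ := hb.1 (u - a.rows) (by simp [NMat.diag] at hu; omega)
      refine ⟨a.cols + v, by simp [NMat.diag]; omega, ?_⟩
      simpa [diag_entry, hua, show a.rows ≤ u by omega] using hne
  · by_cases hva : v < a.cols
    · obtain ⟨u, hu, hne⟩ := ha.2 v hva
      exact ⟨u, by simp [NMat.diag]; omega, by simpa [diag_entry, hu, hva] using hne⟩
    · obtain ⟨u, hu, hne⟩ := hb.2 (v - a.cols) (by simp [NMat.diag] at hv; omega)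
      refine ⟨a.rows + u, by simp [NMat.diag]; omega, ?_⟩
      simpa [diag_entry, hva, show a.cols ≤ v by omega] using hne

end NMat

lemma monomialOf_apply (a : NMat) (ι : Fin a.rows → ℕ) (κ : Fin a.cols → ℕ) (z : ℕ × ℕ) :
    monomialOf a ι κ z = ∑ s, ∑ t, if (ι s, κ t) = z then a.entry s t else 0 := by
  simp only [monomialOf, Finsupp.finsetSum_apply, Finsupp.single_apply]

lemma monomialOf_apply_of_injective (a : NMat) {ι : Fin a.rows → ℕ} {κ : Fin a.cols → ℕ}
    (hι : ι.Injective) (hκ : κ.Injective) (s : Fin a.rows) (t : Fin a.cols) :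
    monomialOf a ι κ (ι s, κ t) = a.entry s t := by
  simp [monomialOf_apply, hι.eq_iff, hκ.eq_iff, ite_and]

lemma mem_range_of_monomialOf_apply_ne_zero (a : NMat) {ι : Fin a.rows → ℕ}
    {κ : Fin a.cols → ℕ} {r c : ℕ} (h : monomialOf a ι κ (r, c) ≠ 0) :
    r ∈ Set.range ι ∧ c ∈ Set.range κ := by
  rw [monomialOf_apply] at h
  obtain ⟨s, -, hs⟩ := exists_ne_zero_of_sum_ne_zero h
  obtain ⟨t, -, ht⟩ := exists_ne_zero_of_sum_ne_zero hs
  obtain ⟨hr, hc⟩ := Prod.mk.inj (by_contra fun hne => ht (if_neg hne))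
  exact ⟨⟨s, hr⟩, ⟨t, hc⟩⟩

lemma range_rows_eq_setOf_ne_zero {a : NMat} (ha : a.IsComp) {ι : Fin a.rows → ℕ}
    {κ : Fin a.cols → ℕ} (hι : ι.Injective) (hκ : κ.Injective) :
    Set.range ι = {r | ∃ c, monomialOf a ι κ (r, c) ≠ 0} := by
  ext r
  refine ⟨?_, fun ⟨c, hc⟩ => (mem_range_of_monomialOf_apply_ne_zero a hc).1⟩
  rintro ⟨s, rfl⟩
  obtain ⟨t, ht, hne⟩ := ha.1 s s.isLt
  exact ⟨κ ⟨t, ht⟩, by rwa [monomialOf_apply_of_injective a hι hκ]⟩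

lemma range_cols_eq_setOf_ne_zero {a : NMat} (ha : a.IsComp) {ι : Fin a.rows → ℕ}
    {κ : Fin a.cols → ℕ} (hι : ι.Injective) (hκ : κ.Injective) :
    Set.range κ = {c | ∃ r, monomialOf a ι κ (r, c) ≠ 0} := by
  ext c
  refine ⟨?_, fun ⟨r, hr⟩ => (mem_range_of_monomialOf_apply_ne_zero a hr).2⟩
  rintro ⟨t, rfl⟩
  obtain ⟨s, hs, hne⟩ := ha.2 t t.isLt
  exact ⟨ι ⟨s, hs⟩, by rwa [monomialOf_apply_of_injective a hι hκ]⟩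

lemma monomialOf_inj {a : NMat} (ha : a.IsComp) {ι ι' : Fin a.rows → ℕ}
    {κ κ' : Fin a.cols → ℕ} (hι : StrictMono ι) (hκ : StrictMono κ) (hι' : StrictMono ι')
    (hκ' : StrictMono κ') : monomialOf a ι κ = monomialOf a ι' κ' ↔ ι = ι' ∧ κ = κ' := by
  refine ⟨fun h => ⟨(hι.range_inj hι').1 ?_, (hκ.range_inj hκ').1 ?_⟩, fun h => h.1 ▸ h.2 ▸ rfl⟩
  · rw [range_rows_eq_setOf_ne_zero ha hι.injective hκ.injective,
      range_rows_eq_setOf_ne_zero ha hι'.injective hκ'.injective, h]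
  · rw [range_cols_eq_setOf_ne_zero ha hι.injective hκ.injective,
      range_cols_eq_setOf_ne_zero ha hι'.injective hκ'.injective, h]

lemma monomialOf_eq_zero_iff (a : NMat) (ι : Fin a.rows → ℕ) (κ : Fin a.cols → ℕ) :
    monomialOf a ι κ = 0 ↔ ∀ (s : Fin a.rows) (t : Fin a.cols), a.entry s t = 0 := by
  simp [monomialOf, Finset.sum_eq_zero_iff]

abbrev Chain (n : ℕ) := {ι : Fin n → ℕ // StrictMono ι}

lemma mem_qShSet_iff {m s j : ℕ} {p : Fin (m + s) → Fin j} :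
    p ∈ qShSet m s j ↔
      p.Surjective ∧ StrictMono (p ∘ Fin.castAdd s) ∧ StrictMono (p ∘ Fin.natAdd m) := by
  simp only [qShSet, mem_filter, mem_univ, true_and]
  refine and_congr_right fun _ => and_congr ⟨fun h u v huv => ?_, fun h u v huv hv => ?_⟩
    ⟨fun h u v huv => ?_, fun h u v huv hu => ?_⟩
  · exact h _ _ (Fin.strictMono_castAdd s huv) v.isLt
  · exact h (a := ⟨u, by omega⟩) (b := ⟨v, hv⟩) huv
  · exact h _ _ (Fin.strictMono_natAdd m huv) (by simp)
  · induction u using Fin.addCases with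
    | left u => exact absurd hu (by simp)
    | right u =>
      induction v using Fin.addCases with
      | left v => exact absurd huv (by rw [not_lt, Fin.le_def]; simp; omega)
      | right v => exact h ((Fin.natAdd_lt_natAdd_iff m).1 huv)

lemma exists_strictMono_comp_surjective {n : ℕ} (f : Fin n → ℕ) :
    ∃ (j : ℕ) (p : Fin n → Fin j) (ρ : Fin j → ℕ), p.Surjective ∧ StrictMono ρ ∧ ρ ∘ p = f := by
  set S := univ.image f
  let p : Fin n → Fin S.card := fun u => (S.orderIsoOfFin rfl).symm ⟨f u, by simp [S]⟩
  have hρp : S.orderEmbOfFin rfl ∘ p = f := by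
    funext u
    simp [p, ← coe_orderIsoOfFin_apply]
  refine ⟨S.card, p, S.orderEmbOfFin rfl, fun i => ?_, (S.orderEmbOfFin rfl).strictMono, hρp⟩
  obtain ⟨u, -, hu⟩ := mem_image.1 (S.orderEmbOfFin_mem rfl i)
  exact ⟨u, (S.orderEmbOfFin rfl).injective (congrFun hρp u |>.trans hu)⟩

abbrev QSh (m s : ℕ) := {jp : Σ j, Fin (m + s) → Fin j // jp.2 ∈ qShSet m s jp.1}

def mergeChains {m s : ℕ} (x : Σ jp : QSh m s, Chain jp.1.1) : Chain m × Chain s :=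
  (⟨x.2.1 ∘ x.1.1.2 ∘ Fin.castAdd s, x.2.2.comp (mem_qShSet_iff.1 x.1.2).2.1⟩,
   ⟨x.2.1 ∘ x.1.1.2 ∘ Fin.natAdd m, x.2.2.comp (mem_qShSet_iff.1 x.1.2).2.2⟩)

lemma mergeChains_injective (m s : ℕ) : (mergeChains (m := m) (s := s)).Injective := by
  rintro ⟨⟨⟨j, p⟩, hp⟩, ρ, hρ⟩ ⟨⟨⟨j', p'⟩, hp'⟩, ρ', hρ'⟩ h
  simp only [mergeChains, Prod.mk.injEq, Subtype.mk.injEq] at h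
  have hcomp : ρ ∘ p = ρ' ∘ p' := funext <| Fin.addCases (congrFun h.1) (congrFun h.2)
  have hrange : Set.range ρ = Set.range ρ' := by
    rw [← (mem_qShSet_iff.1 hp).1.range_comp, ← (mem_qShSet_iff.1 hp').1.range_comp, hcomp]
  obtain rfl : j = j' := by
    have h := Nat.card_range_of_injective hρ'.injective
    rw [← hrange, Nat.card_range_of_injective hρ.injective] at h
    simpa using h
  obtain rfl : ρ = ρ' := (hρ.range_inj hρ').1 hrange
  obtain rfl : p = p' := hρ.injective.comp_left hcomp
  rfl

lemma mergeChains_surjective (m s : ℕ) : (mergeChains (m := m) (s := s)).Surjective := by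
  rintro ⟨⟨ι, hι⟩, ⟨ι', hι'⟩⟩
  obtain ⟨j, p, ρ, hp, hρ, hρp⟩ := exists_strictMono_comp_surjective (Fin.append ι ι')
  have hleft : ρ ∘ p ∘ Fin.castAdd s = ι := by
    rw [← Function.comp_assoc, hρp]; exact funext (Fin.append_left ι ι')
  have hright : ρ ∘ p ∘ Fin.natAdd m = ι' := by
    rw [← Function.comp_assoc, hρp]; exact funext (Fin.append_right ι ι')
  have hmem : p ∈ qShSet m s j := mem_qShSet_iff.2
    ⟨hp, fun u v huv => hρ.lt_iff_lt.1 (by simpa [← hleft] using hι huv),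
      fun u v huv => hρ.lt_iff_lt.1 (by simpa [← hright] using hι' huv)⟩
  exact ⟨⟨⟨⟨j, p⟩, hmem⟩, ρ, hρ⟩, by simp only [mergeChains, hleft, hright]⟩

noncomputable def mergeChainsEquiv (m s : ℕ) :
    (Σ jp : QSh m s, Chain jp.1.1) ≃ Chain m × Chain s :=
  .ofBijective mergeChains ⟨mergeChains_injective m s, mergeChains_surjective m s⟩

lemma nQshMat_entry (a b : NMat) {j k : ℕ} (p : Fin (a.rows + b.rows) → Fin j)
    (q : Fin (a.cols + b.cols) → Fin k) (x : Fin j) (y : Fin k) :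
    (nQshMat a b p q).entry x y =
      ∑ u ∈ univ.filter (p · = x), ∑ v ∈ univ.filter (q · = y), (a.diag b).entry u v := by
  simp [nQshMat]

lemma monomialOf_diag (a b : NMat) (ι : Fin (a.rows + b.rows) → ℕ)
    (κ : Fin (a.cols + b.cols) → ℕ) :
    monomialOf (a.diag b) ι κ =
      monomialOf a (ι ∘ Fin.castAdd b.rows) (κ ∘ Fin.castAdd b.cols) +
        monomialOf b (ι ∘ Fin.natAdd a.rows) (κ ∘ Fin.natAdd a.cols) := by
  have hr (u : Fin a.rows) : ¬a.rows ≤ u := not_le.2 u.isLt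
  have hc (v : Fin a.cols) : ¬a.cols ≤ v := not_le.2 v.isLt
  change ∑ u : Fin (a.rows + b.rows), ∑ v : Fin (a.cols + b.cols), _ = _
  simp [monomialOf, Fin.sum_univ_add, NMat.diag_entry, hr, hc]

lemma monomialOf_nQshMat (a b : NMat) {j k : ℕ} (p : Fin (a.rows + b.rows) → Fin j)
    (q : Fin (a.cols + b.cols) → Fin k) (ρ : Fin j → ℕ) (σ : Fin k → ℕ) :
    monomialOf (nQshMat a b p q) ρ σ =
      monomialOf a (ρ ∘ p ∘ Fin.castAdd b.rows) (σ ∘ q ∘ Fin.castAdd b.cols) +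
        monomialOf b (ρ ∘ p ∘ Fin.natAdd a.rows) (σ ∘ q ∘ Fin.natAdd a.cols) := by
  refine Eq.trans ?_ (monomialOf_diag a b (ρ ∘ p) (σ ∘ q))
  change ∑ x : Fin j, ∑ y : Fin k, Finsupp.single (ρ x, σ y) ((nQshMat a b p q).entry x y) =
    ∑ u : Fin (a.rows + b.rows), ∑ v : Fin (a.cols + b.cols),
      Finsupp.single (ρ (p u), σ (q v)) ((a.diag b).entry u v)
  simp only [nQshMat_entry, Finsupp.single_finsetSum]
  rw [← sum_fiberwise univ p]
  refine sum_congr rfl fun x _ => ?_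
  rw [sum_comm]
  refine sum_congr rfl fun u hu => ?_
  rw [← sum_fiberwise univ q]
  refine sum_congr rfl fun y _ => sum_congr rfl fun v hv => ?_
  rw [(mem_filter.1 hu).2, (mem_filter.1 hv).2]

lemma entry_diag_le_entry_nQshMat (a b : NMat) {j k : ℕ} (p : Fin (a.rows + b.rows) → Fin j)
    (q : Fin (a.cols + b.cols) → Fin k) (u : Fin (a.rows + b.rows))
    (v : Fin (a.cols + b.cols)) :
    (a.diag b).entry u v ≤ (nQshMat a b p q).entry (p u) (q v) :=
  calc (a.diag b).entry u v ≤ ∑ v' ∈ univ.filter (q · = q v), (a.diag b).entry u v' :=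
        single_le_sum (f := fun v' : Fin (a.cols + b.cols) => (a.diag b).entry u v')
          (fun _ _ => Nat.zero_le _) (by simp)
    _ ≤ ∑ u' ∈ univ.filter (p · = p u), ∑ v' ∈ univ.filter (q · = q v), (a.diag b).entry u' v' :=
        single_le_sum
          (f := fun u' : Fin (a.rows + b.rows) =>
            ∑ v' ∈ univ.filter (q · = q v), (a.diag b).entry u' v')
          (fun _ _ => Nat.zero_le _) (by simp)
    _ = _ := (nQshMat_entry a b p q _ _).symm

lemma NMat.IsComp.nQshMat {a b : NMat} (ha : a.IsComp) (hb : b.IsComp) {j k : ℕ}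
    {p : Fin (a.rows + b.rows) → Fin j} {q : Fin (a.cols + b.cols) → Fin k}
    (hp : p.Surjective) (hq : q.Surjective) : (nQshMat a b p q).IsComp := by
  have hab := ha.diag hb
  refine ⟨fun x hx => ?_, fun y hy => ?_⟩
  · obtain ⟨u, hu⟩ := hp ⟨x, hx⟩
    obtain ⟨v, hv, hne⟩ := hab.1 u u.isLt
    have := entry_diag_le_entry_nQshMat a b p q u ⟨v, hv⟩
    rw [hu] at this
    exact ⟨q ⟨v, hv⟩, (q _).isLt, ((Nat.pos_of_ne_zero hne).trans_le this).ne'⟩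
  · obtain ⟨v, hv⟩ := hq ⟨y, hy⟩
    obtain ⟨u, hu, hne⟩ := hab.2 v v.isLt
    have := entry_diag_le_entry_nQshMat a b p q ⟨u, hu⟩ v
    rw [hv] at this
    exact ⟨p ⟨u, hu⟩, (p _).isLt, ((Nat.pos_of_ne_zero hne).trans_le this).ne'⟩

abbrev ProductChains (a b : NMat) (M : Mon) :=
  {x : (Chain a.rows × Chain b.rows) × (Chain a.cols × Chain b.cols) //
    monomialOf a x.1.1 x.2.1 + monomialOf b x.1.2 x.2.2 = M}

abbrev QShuffleChains (a b : NMat) (M : Mon) :=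
  {x : (Σ jp : QSh a.rows b.rows, Chain jp.1.1) × (Σ kq : QSh a.cols b.cols, Chain kq.1.1) //
    monomialOf (nQshMat a b x.1.1.1.2 x.2.1.1.2) x.1.2.1 x.2.2.1 = M}

noncomputable def qShuffleChainsEquiv (a b : NMat) (M : Mon) :
    QShuffleChains a b M ≃ ProductChains a b M :=
  (mergeChainsEquiv a.rows b.rows |>.prodCongr (mergeChainsEquiv a.cols b.cols)).subtypeEquiv
    fun x => by
      rw [monomialOf_nQshMat]
      rfl

lemma mulF_monQ_apply {R : Type*} [CommRing R] {a b : NMat} (ha : a.IsComp) (hb : b.IsComp)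
    (M : Mon) : mulF (monQ (R := R) a) (monQ b) M = Nat.card (ProductChains a b M) := by
  simp only [mulF, monQ, ite_zero_mul_ite_zero, one_mul]
  rw [sum_boole, ← Nat.card_eq_finsetCard]
  congr 1
  refine (Nat.card_eq_of_bijective (fun x => ⟨(monomialOf a x.1.1.1 x.1.2.1,
    monomialOf b x.1.1.2 x.1.2.2), mem_filter.2 ⟨mem_antidiagonal.2 x.2,
      ⟨_, _, x.1.1.1.2, x.1.2.1.2, rfl⟩, ⟨_, _, x.1.1.2.2, x.1.2.2.2, rfl⟩⟩⟩) ⟨?_, ?_⟩).symm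
  · rintro ⟨⟨⟨⟨ι, hι⟩, ⟨ι', hι'⟩⟩, ⟨κ, hκ⟩, ⟨κ', hκ'⟩⟩, _⟩
      ⟨⟨⟨⟨ι₂, hι₂⟩, ⟨ι₂', hι₂'⟩⟩, ⟨κ₂, hκ₂⟩, ⟨κ₂', hκ₂'⟩⟩, _⟩ h
    simp only [Subtype.mk.injEq, Prod.mk.injEq] at h
    obtain ⟨rfl, rfl⟩ := (monomialOf_inj ha hι hκ hι₂ hκ₂).1 h.1
    obtain ⟨rfl, rfl⟩ := (monomialOf_inj hb hι' hκ' hι₂' hκ₂').1 h.2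
    rfl
  · rintro ⟨⟨m₁, m₂⟩, hm⟩
    obtain ⟨hsum, ⟨ι, κ, hι, hκ, rfl⟩, ⟨ι', κ', hι', hκ', rfl⟩⟩ := mem_filter.1 hm
    exact ⟨⟨⟨⟨⟨ι, hι⟩, ⟨ι', hι'⟩⟩, ⟨κ, hκ⟩, ⟨κ', hκ'⟩⟩, mem_antidiagonal.1 hsum⟩, rfl⟩

lemma mem_range_sigma_qShSet {m s : ℕ} {jp : Σ j, Fin (m + s) → Fin j} :
    jp ∈ (range (m + s + 1)).sigma (qShSet m s) ↔ jp.2 ∈ qShSet m s jp.1 := by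
  refine mem_sigma.trans (and_iff_right_of_imp fun hp => mem_range.2 (Nat.lt_succ_of_le ?_))
  simpa using Fintype.card_le_of_surjective _ (mem_qShSet_iff.1 hp).1

lemma sum_monQ_nQshMat_apply {R : Type*} [CommRing R] {a b : NMat} (ha : a.IsComp)
    (hb : b.IsComp) (M : Mon) :
    ∑ j ∈ range (a.rows + b.rows + 1), ∑ k ∈ range (a.cols + b.cols + 1),
      ∑ p ∈ qShSet a.rows b.rows j, ∑ q ∈ qShSet a.cols b.cols k,
        monQ (R := R) (nQshMat a b p q) M = Nat.card (QShuffleChains a b M) := by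
  set T := (range (a.rows + b.rows + 1)).sigma (qShSet a.rows b.rows) ×ˢ
    (range (a.cols + b.cols + 1)).sigma (qShSet a.cols b.cols)
  have hT : ∑ j ∈ range (a.rows + b.rows + 1), ∑ k ∈ range (a.cols + b.cols + 1),
      ∑ p ∈ qShSet a.rows b.rows j, ∑ q ∈ qShSet a.cols b.cols k,
        monQ (R := R) (nQshMat a b p q) M = ∑ w ∈ T, monQ (nQshMat a b w.1.2 w.2.2) M := by
    simp only [T, sum_product, sum_sigma]
    exact sum_congr rfl fun j _ => sum_comm
  rw [hT]
  simp only [monQ]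
  rw [sum_boole, ← Nat.card_eq_finsetCard]
  congr 1
  refine (Nat.card_eq_of_bijective (fun x => ⟨(x.1.1.1.1, x.1.2.1.1), mem_filter.2
    ⟨mem_product.2 ⟨mem_range_sigma_qShSet.2 x.1.1.1.2, mem_range_sigma_qShSet.2 x.1.2.1.2⟩,
      _, _, x.1.1.2.2, x.1.2.2.2, x.2.symm⟩⟩) ⟨?_, ?_⟩).symm
  · rintro ⟨⟨⟨⟨⟨j, p⟩, hp⟩, ρ, hρ⟩, ⟨⟨k, q⟩, hq⟩, σ, hσ⟩, hx⟩
      ⟨⟨⟨⟨⟨j', p'⟩, hp'⟩, ρ', hρ'⟩, ⟨⟨k', q'⟩, hq'⟩, σ', hσ'⟩, hx'⟩ h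
    simp only [Subtype.mk.injEq, Prod.mk.injEq, Sigma.mk.injEq] at h
    obtain ⟨⟨rfl, rfl⟩, rfl, rfl⟩ := h
    have hc := (ha.nQshMat hb (mem_qShSet_iff.1 hp).1 (mem_qShSet_iff.1 hq).1)
    obtain ⟨rfl, rfl⟩ := (monomialOf_inj hc hρ hσ hρ' hσ').1 (hx.trans hx'.symm)
    rfl
  · rintro ⟨⟨⟨j, p⟩, ⟨k, q⟩⟩, hw⟩
    obtain ⟨hT, ρ, σ, hρ, hσ, hM⟩ := mem_filter.1 hw
    obtain ⟨hjp, hkq⟩ := mem_product.1 hT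
    exact ⟨⟨(⟨⟨⟨j, p⟩, mem_range_sigma_qShSet.1 hjp⟩, ρ, hρ⟩,
      ⟨⟨⟨k, q⟩, mem_range_sigma_qShSet.1 hkq⟩, σ, hσ⟩), hM.symm⟩, rfl⟩

theorem mulF_monQ {R : Type*} [CommRing R] {a b : NMat} (ha : a.IsComp) (hb : b.IsComp) :
    mulF (monQ (R := R) a) (monQ (R := R) b) =
      ∑ j ∈ range (a.rows + b.rows + 1), ∑ k ∈ range (a.cols + b.cols + 1),
        ∑ p ∈ qShSet a.rows b.rows j, ∑ q ∈ qShSet a.cols b.cols k,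
          monQ (R := R) (nQshMat a b p q) := by
  funext M
  simp only [Finset.sum_apply]
  rw [mulF_monQ_apply ha hb, sum_monQ_nQshMat_apply ha hb,
    Nat.card_congr (qShuffleChainsEquiv a b M)]

def gridMat (m : Mon) {r c : ℕ} (ι : Fin r → ℕ) (κ : Fin c → ℕ) : NMat where
  rows := r
  cols := c
  entry i j := if h : i < r ∧ j < c then m (ι ⟨i, h.1⟩, κ ⟨j, h.2⟩) else 0
  entry_eq_zero _ _ h := dif_neg (by omega)

lemma gridMat_entry (m : Mon) {r c : ℕ} (ι : Fin r → ℕ) (κ : Fin c → ℕ) (s : Fin r)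
    (t : Fin c) : (gridMat m ι κ).entry s t = m (ι s, κ t) :=
  dif_pos ⟨s.isLt, t.isLt⟩

lemma exists_monomialOf (m : Mon) :
    ∃ a : NMat, a.IsComp ∧ ∃ (ι : Fin a.rows → ℕ) (κ : Fin a.cols → ℕ),
      StrictMono ι ∧ StrictMono κ ∧ m = monomialOf a ι κ := by
  set R := m.support.image Prod.fst
  set C := m.support.image Prod.snd
  set ι := R.orderEmbOfFin rfl
  set κ := C.orderEmbOfFin rfl
  have hsupp {r c : ℕ} (h : m (r, c) ≠ 0) : r ∈ Set.range ι ∧ c ∈ Set.range κ := by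
    simp only [ι, κ, range_orderEmbOfFin, mem_coe, R, C, mem_image, Finsupp.mem_support_iff]
    exact ⟨⟨_, h, rfl⟩, ⟨_, h, rfl⟩⟩
  refine ⟨gridMat m ι κ, ⟨fun s hs => ?_, fun t ht => ?_⟩, ι, κ, ι.strictMono, κ.strictMono, ?_⟩
  · obtain ⟨⟨r, c⟩, hrc, hr⟩ := mem_image.1 (R.orderEmbOfFin_mem rfl ⟨s, hs⟩)
    obtain ⟨t, rfl⟩ := (hsupp (Finsupp.mem_support_iff.1 hrc)).2
    refine ⟨t, t.isLt, ?_⟩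
    rw [gridMat_entry m ι κ ⟨s, hs⟩ t, ← show r = ι ⟨s, hs⟩ from hr]
    exact Finsupp.mem_support_iff.1 hrc
  · obtain ⟨⟨r, c⟩, hrc, hc⟩ := mem_image.1 (C.orderEmbOfFin_mem rfl ⟨t, ht⟩)
    obtain ⟨s, rfl⟩ := (hsupp (Finsupp.mem_support_iff.1 hrc)).1
    refine ⟨s, s.isLt, ?_⟩
    rw [gridMat_entry m ι κ s ⟨t, ht⟩, ← show c = κ ⟨t, ht⟩ from hc]
    exact Finsupp.mem_support_iff.1 hrc
  · ext ⟨r, c⟩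
    by_cases h : r ∈ Set.range ι ∧ c ∈ Set.range κ
    · obtain ⟨⟨s, rfl⟩, ⟨t, rfl⟩⟩ := h
      exact ((monomialOf_apply_of_injective (gridMat m ι κ) ι.injective κ.injective s t).trans
        (gridMat_entry m ι κ s t)).symm
    · exact (not_imp_comm.1 hsupp h).trans
        (not_imp_comm.1 (mem_range_of_monomialOf_apply_ne_zero (gridMat m ι κ)) h).symm

lemma embDomain_monomialOf (a : NMat) (ι : Fin a.rows → ℕ) (κ : Fin a.cols → ℕ)
    (φ ψ : ℕ ↪ ℕ) :
    (monomialOf a ι κ).embDomain (φ.prodMap ψ) = monomialOf a (φ ∘ ι) (ψ ∘ κ) := by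
  simp [monomialOf, Finsupp.embDomain_eq_mapDomain, Finsupp.mapDomain_finsetSum]

lemma IsQSym.apply_embDomain {R : Type*} [CommRing R] {f : Mon → R} (hf : IsQSym f)
    (φ ψ : ℕ ↪o ℕ) (m : Mon) :
    f (m.embDomain (φ.toEmbedding.prodMap ψ.toEmbedding)) = f m := by
  obtain ⟨a, ha, ι, κ, hι, hκ, rfl⟩ := exists_monomialOf m
  rw [embDomain_monomialOf]
  exact (hf.2 a ha _ _ (φ.strictMono.comp hι) (ψ.strictMono.comp hκ)).trans
    (hf.2 a ha ι κ hι hκ).symm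

lemma mulF_embDomain {R : Type*} [CommRing R] (f g : Mon → R) (Φ : ℕ × ℕ ↪ ℕ × ℕ) (m : Mon) :
    mulF f g (m.embDomain Φ) = mulF (f ∘ Finsupp.embDomain Φ) (g ∘ Finsupp.embDomain Φ) m := by
  rw [mulF, ← Finsupp.image_prodMap_embDomain_antidiagonal, sum_image]
  · rfl
  · exact fun _ _ _ _ h => (Finsupp.embDomain_injective Φ).prodMap
      (Finsupp.embDomain_injective Φ) h

lemma exists_orderEmbedding_extend {n : ℕ} {ι : Fin n → ℕ} (hι : StrictMono ι) :
    ∃ φ : ℕ ↪o ℕ, ∀ s : Fin n, φ s = ι s := by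
  let N := univ.sup ι + 1
  let φ : ℕ → ℕ := fun k => if h : k < n then ι ⟨k, h⟩ else N + k
  have hφ : StrictMono φ := strictMono_nat_of_lt_succ fun k => by
    by_cases hk : k + 1 < n
    · simpa [φ, hk, show k < n by omega] using hι (show (⟨k, _⟩ : Fin n) < ⟨k + 1, hk⟩ by simp)
    · by_cases hk' : k < n
      · have := le_sup (f := ι) (mem_univ ⟨k, hk'⟩)
        simp only [φ, hk, hk', dite_true, dite_false, N]
        omega
      · simp only [φ, hk, hk', dite_false]
        omega
  exact ⟨.ofStrictMono φ hφ, fun s => by simp [φ, s.isLt]⟩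

lemma mdeg_add (m₁ m₂ : Mon) : mdeg (m₁ + m₂) = mdeg m₁ + mdeg m₂ :=
  map_add Finsupp.degree m₁ m₂

lemma FinDeg.mulF {R : Type*} [CommRing R] {f g : Mon → R} (hf : FinDeg f) (hg : FinDeg g) :
    FinDeg (mulF f g) := by
  obtain ⟨D, hD⟩ := hf
  obtain ⟨E, hE⟩ := hg
  refine ⟨D + E, fun m hm => ?_⟩
  obtain ⟨⟨m₁, m₂⟩, hz, hne⟩ := exists_ne_zero_of_sum_ne_zero hm
  rw [← mem_antidiagonal.1 hz, mdeg_add]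
  exact add_le_add (hD _ (left_ne_zero_of_mul hne)) (hE _ (right_ne_zero_of_mul hne))

theorem IsQSym.mulF {R : Type*} [CommRing R] {f g : Mon → R} (hf : IsQSym f) (hg : IsQSym g) :
    IsQSym (mulF f g) := by
  refine ⟨hf.1.mulF hg.1, fun a ha ι κ hι hκ => ?_⟩
  obtain ⟨φ, hφ⟩ := exists_orderEmbedding_extend hι
  obtain ⟨ψ, hψ⟩ := exists_orderEmbedding_extend hκ
  have hM : monomialOf a ι κ = (monomialOf a (fun s => (s : ℕ)) (fun t => (t : ℕ))).embDomain
      (φ.toEmbedding.prodMap ψ.toEmbedding) := by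
    rw [embDomain_monomialOf]
    congr <;> funext <;> simp [hφ, hψ]
  rw [hM, mulF_embDomain]
  congr 1 <;> funext m
  exacts [hf.apply_embDomain φ ψ m, hg.apply_embDomain φ ψ m]

lemma isQSym_one {R : Type*} [CommRing R] :
    IsQSym (fun m : Mon => if m = 0 then (1 : R) else 0) := by
  refine ⟨⟨0, fun m hm => ?_⟩, fun a _ ι κ _ _ => ?_⟩
  · obtain rfl : m = 0 := by_contra fun h => hm (if_neg h)
    simp [mdeg]
  · simp only [monomialOf_eq_zero_iff]

end TwoParam

open TwoParam in
theorem statement17_general (R : Type*) [CommRing R] :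
    (∀ a b : NMat, a.IsComp → b.IsComp →
      mulF (monQ (R := R) a) (monQ (R := R) b) =
        ∑ j ∈ Finset.range (a.rows + b.rows + 1),
          ∑ k ∈ Finset.range (a.cols + b.cols + 1),
            ∑ p ∈ qShSet a.rows b.rows j,
              ∑ q ∈ qShSet a.cols b.cols k,
                monQ (R := R) (nQshMat a b p q)) ∧
    (∀ f g : Mon → R, IsQSym f → IsQSym g → IsQSym (mulF f g)) ∧
    IsQSym (fun m : Mon => if m = 0 then (1 : R) else 0) :=
  ⟨fun _ _ => mulF_monQ, fun _ _ => IsQSym.mulF, isQSym_one⟩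

open TwoParam in
/-- the quasi-shuffle identity for monomial two-parameter
quasisymmetric functions; in particular `QSym` is closed under
multiplication and contains `1`. -/
theorem statement17 (R : Type*) [CommRing R] [IsDomain R] :
    (∀ a b : NMat, a.IsComp → b.IsComp →
      mulF (monQ (R := R) a) (monQ (R := R) b) =
        ∑ j ∈ Finset.range (a.rows + b.rows + 1),
          ∑ k ∈ Finset.range (a.cols + b.cols + 1),
            ∑ p ∈ qShSet a.rows b.rows j,
              ∑ q ∈ qShSet a.cols b.cols k,
                monQ (R := R) (nQshMat a b p q)) ∧
    (∀ f g : Mon → R, IsQSym f → IsQSym g → IsQSym (mulF f g)) ∧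
    IsQSym (fun m : Mon => if m = 0 then (1 : R) else 0) :=
  statement17_general R
end

section
/- A formal power series f over R of finite total degree in the variables x_{i,j} is a two-parameter quasisymmetric function if and only if zero_{a,k}(f) = f for every axis a ∈ {1,2} and every k ∈ ℕ. -/
open scoped Classical

/-! A monomial can be written as `∏ x_{ι_s,κ_t}^{a_{s,t}}` with `a` a composition and `ι`, `κ`
strictly increasing; `zero_{1,k}` and `zero_{2,k}` then act on the coefficient at this monomial by
composing `ι`, resp. `κ`, with the map `ℕ → ℕ` that skips the value `k`. Every strictly increasing
chain arises from `0 < 1 < ⋯` by finitely many such skips (undo the skip of the first value the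
chain misses), so invariance under all `zero_{a,k}` is exactly quasisymmetry. -/

namespace TwoParam

/-- The ℕ-analogue of `Fin.succAbove`. -/
def succAbove (k n : ℕ) : ℕ := if n < k then n else n + 1

lemma succAbove_strictMono (k : ℕ) : StrictMono (succAbove k) := by
  intro m n h
  unfold succAbove
  split_ifs <;> omega

lemma liftIdx_zero (k : ℕ) (i : ℕ × ℕ) : liftIdx 0 k i = (succAbove k i.1, i.2) := by
  unfold liftIdx succAbove
  split_ifs <;> simp_all

lemma liftIdx_one (k : ℕ) (i : ℕ × ℕ) : liftIdx 1 k i = (i.1, succAbove k i.2) := by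
  unfold liftIdx succAbove
  split_ifs <;> simp_all

section MonomialOf

variable (a : NMat) (ι : Fin a.rows → ℕ) (κ : Fin a.cols → ℕ)

lemma mapDomain_monomialOf (g : ℕ × ℕ → ℕ × ℕ) :
    (monomialOf a ι κ).mapDomain g =
      ∑ s : Fin a.rows, ∑ t : Fin a.cols, Finsupp.single (g (ι s, κ t)) (a.entry s t) := by
  simp only [monomialOf, Finsupp.mapDomain_finsetSum, Finsupp.mapDomain_single]

lemma zeroF_zero_apply_monomialOf {R : Type*} [CommRing R] (f : Mon → R) (k : ℕ) :
    zeroF 0 k f (monomialOf a ι κ) = f (monomialOf a (succAbove k ∘ ι) κ) := by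
  rw [zeroF, mapDomain_monomialOf]
  simp only [liftIdx_zero]
  rfl

lemma zeroF_one_apply_monomialOf {R : Type*} [CommRing R] (f : Mon → R) (k : ℕ) :
    zeroF 1 k f (monomialOf a ι κ) = f (monomialOf a ι (succAbove k ∘ κ)) := by
  rw [zeroF, mapDomain_monomialOf]
  simp only [liftIdx_one]
  rfl

variable {a ι κ}

lemma monomialOf_apply_mk (hι : Function.Injective ι) (hκ : Function.Injective κ)
    (s : Fin a.rows) (t : Fin a.cols) : monomialOf a ι κ (ι s, κ t) = a.entry s t := by
  simp [monomialOf, Finsupp.single_apply, hι.eq_iff, hκ.eq_iff, ite_and]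

lemma monomialOf_apply_of_forall_ne {i : ℕ × ℕ} (hi : ∀ s t, (ι s, κ t) ≠ i) :
    monomialOf a ι κ i = 0 := by
  simp [monomialOf, hi]

end MonomialOf

section Chains

variable {n : ℕ} {ι : Fin n → ℕ}

lemma val_le_of_strictMono (hι : StrictMono ι) (s : Fin n) : (s : ℕ) ≤ ι s := by
  obtain ⟨s, hs⟩ := s
  induction s with
  | zero => exact Nat.zero_le _
  | succ t ih =>
    exact (ih (by omega)).trans_lt (hι (show (⟨t, by omega⟩ : Fin n) < ⟨t + 1, hs⟩ from
      Nat.lt_succ_self t))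

lemma exists_succAbove_comp_eq (hι : StrictMono ι) {k : ℕ} (hk : ∀ s, ι s ≠ k)
    {s₀ : Fin n} (hs₀ : k < ι s₀) :
    ∃ ι' : Fin n → ℕ, StrictMono ι' ∧ succAbove k ∘ ι' = ι ∧ ∑ s, ι' s < ∑ s, ι s := by
  refine ⟨fun s => if ι s < k then ι s else ι s - 1, fun s t hst => ?_, funext fun s => ?_, ?_⟩
  · have := hι hst
    have := hk s
    have := hk t
    dsimp only
    split_ifs <;> omega
  · have := hk s
    simp only [Function.comp_apply, succAbove]
    split_ifs <;> omega
  · exact Finset.sum_lt_sum (fun s _ => by split_ifs <;> omega)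
      ⟨s₀, Finset.mem_univ _, by split_ifs <;> omega⟩

lemma exists_gap_of_ne_val (hι : StrictMono ι) (hne : ι ≠ Fin.val) :
    ∃ k, (∀ s, ι s ≠ k) ∧ ∃ s, k < ι s := by
  obtain ⟨s₀, hs₀, hmin⟩ := WellFounded.has_min wellFounded_lt {s | ι s ≠ s}
    (by simpa [funext_iff, Set.Nonempty] using hne)
  have hbelow : ∀ s < s₀, ι s = s := fun s hs => by_contra fun h => hmin s h hs
  have hgt : (s₀ : ℕ) < ι s₀ := (val_le_of_strictMono hι s₀).lt_of_ne' hs₀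
  refine ⟨s₀, fun s hs => ?_, s₀, hgt⟩
  rcases lt_trichotomy s s₀ with h | rfl | h
  · exact (Fin.val_fin_lt.mpr h).ne (hbelow s h ▸ hs)
  · exact hs₀ hs
  · exact (hgt.trans (hι h)).ne' hs

lemma eq_val_of_succAbove_comp_invariant {X : Type*} (F : (Fin n → ℕ) → X)
    (hF : ∀ k ι, StrictMono ι → F (succAbove k ∘ ι) = F ι) (hι : StrictMono ι) :
    F ι = F Fin.val := by
  induction hN : ∑ s, ι s using Nat.strong_induction_on generalizing ι with
  | _ N ih =>
    by_cases hval : ι = Fin.val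
    · rw [hval]
    obtain ⟨k, hk, s₀, hs₀⟩ := exists_gap_of_ne_val hι hval
    obtain ⟨ι', hι', rfl, hlt⟩ := exists_succAbove_comp_eq hι hk hs₀
    rw [hF k ι' hι']
    exact ih _ (hN ▸ hlt) hι' rfl

end Chains

section Standardization

variable (m : Mon)

noncomputable def rowChain : Fin (m.support.image Prod.fst).card → ℕ :=
  (m.support.image Prod.fst).orderEmbOfFin rfl

noncomputable def colChain : Fin (m.support.image Prod.snd).card → ℕ :=
  (m.support.image Prod.snd).orderEmbOfFin rfl

/-- The exponent matrix of `m` with its empty rows and columns deleted. -/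
noncomputable def stdMat : NMat where
  rows := (m.support.image Prod.fst).card
  cols := (m.support.image Prod.snd).card
  entry i j :=
    if h : i < (m.support.image Prod.fst).card ∧ j < (m.support.image Prod.snd).card then
      m (rowChain m ⟨i, h.1⟩, colChain m ⟨j, h.2⟩)
    else 0
  entry_eq_zero _ _ h := dif_neg (by omega)

lemma stdMat_entry (s : Fin (stdMat m).rows) (t : Fin (stdMat m).cols) :
    (stdMat m).entry s t = m (rowChain m s, colChain m t) :=
  dif_pos ⟨s.isLt, t.isLt⟩

lemma rowChain_strictMono : StrictMono (rowChain m) := OrderEmbedding.strictMono _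

lemma colChain_strictMono : StrictMono (colChain m) := OrderEmbedding.strictMono _

variable {m}

lemma exists_rowChain_eq {i : ℕ × ℕ} (hi : i ∈ m.support) : ∃ s, rowChain m s = i.1 := by
  rw [← Set.mem_range, rowChain, Finset.range_orderEmbOfFin]
  exact Finset.mem_image_of_mem _ hi

lemma exists_colChain_eq {i : ℕ × ℕ} (hi : i ∈ m.support) : ∃ t, colChain m t = i.2 := by
  rw [← Set.mem_range, colChain, Finset.range_orderEmbOfFin]
  exact Finset.mem_image_of_mem _ hi

variable (m)

lemma stdMat_isComp : (stdMat m).IsComp := by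
  constructor
  · intro i hi
    obtain ⟨x, hx, hx1⟩ := Finset.mem_image.mp (Finset.orderEmbOfFin_mem _ rfl ⟨i, hi⟩)
    obtain ⟨t, ht⟩ := exists_colChain_eq hx
    have hxt : (rowChain m ⟨i, hi⟩, colChain m t) = x := Prod.ext hx1.symm ht
    refine ⟨t, t.isLt, ?_⟩
    rw [show (stdMat m).entry i t = _ from stdMat_entry m ⟨i, hi⟩ t]
    exact hxt ▸ Finsupp.mem_support_iff.mp hx
  · intro j hj
    obtain ⟨x, hx, hx2⟩ := Finset.mem_image.mp (Finset.orderEmbOfFin_mem _ rfl ⟨j, hj⟩)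
    obtain ⟨s, hs⟩ := exists_rowChain_eq hx
    have hxs : (rowChain m s, colChain m ⟨j, hj⟩) = x := Prod.ext hs hx2.symm
    refine ⟨s, s.isLt, ?_⟩
    rw [show (stdMat m).entry s j = _ from stdMat_entry m s ⟨j, hj⟩]
    exact hxs ▸ Finsupp.mem_support_iff.mp hx

lemma monomialOf_stdMat : monomialOf (stdMat m) (rowChain m) (colChain m) = m := by
  ext i
  by_cases hi : ∃ s t, (rowChain m s, colChain m t) = i
  · obtain ⟨s, t, rfl⟩ := hi
    exact (monomialOf_apply_mk (a := stdMat m) (rowChain_strictMono m).injective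
      (colChain_strictMono m).injective s t).trans (stdMat_entry m s t)
  · push Not at hi
    refine (monomialOf_apply_of_forall_ne (a := stdMat m) hi).trans ?_
    rw [eq_comm, ← Finsupp.notMem_support_iff]
    intro hm
    obtain ⟨s, hs⟩ := exists_rowChain_eq hm
    obtain ⟨t, ht⟩ := exists_colChain_eq hm
    exact hi s t (Prod.ext hs ht)

end Standardization

lemma exists_monomialOf_eq (m : Mon) :
    ∃ (a : NMat) (ι : Fin a.rows → ℕ) (κ : Fin a.cols → ℕ), a.IsComp ∧
      StrictMono ι ∧ StrictMono κ ∧ monomialOf a ι κ = m :=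
  ⟨stdMat m, rowChain m, colChain m, stdMat_isComp m, rowChain_strictMono m,
    colChain_strictMono m, monomialOf_stdMat m⟩

variable {R : Type*} [CommRing R] {f : Mon → R}

lemma IsQSym.zeroF_eq (hq : IsQSym f) (ax : Fin 2) (k : ℕ) : zeroF ax k f = f := by
  funext m
  obtain ⟨a, ι, κ, ha, hι, hκ, rfl⟩ := exists_monomialOf_eq m
  have hskip := succAbove_strictMono k
  match ax with
  | 0 =>
    rw [zeroF_zero_apply_monomialOf, hq.2 a ha _ κ (hskip.comp hι) hκ, hq.2 a ha ι κ hι hκ]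
  | 1 =>
    rw [zeroF_one_apply_monomialOf, hq.2 a ha ι _ hι (hskip.comp hκ), hq.2 a ha ι κ hι hκ]

lemma isQSym_of_zeroF_eq (hf : FinDeg f) (hz : ∀ ax k, zeroF ax k f = f) : IsQSym f := by
  refine ⟨hf, fun a _ ι κ hι hκ => ?_⟩
  have hrows : ∀ κ', f (monomialOf a ι κ') = f (monomialOf a Fin.val κ') := fun κ' =>
    eq_val_of_succAbove_comp_invariant (fun ι' => f (monomialOf a ι' κ'))
      (fun k ι' _ => (zeroF_zero_apply_monomialOf a ι' κ' f k).symm.trans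
        (congrFun (hz 0 k) _)) hι
  have hcols : f (monomialOf a Fin.val κ) = f (monomialOf a Fin.val Fin.val) :=
    eq_val_of_succAbove_comp_invariant (fun κ' => f (monomialOf a Fin.val κ'))
      (fun k κ' _ => (zeroF_one_apply_monomialOf a _ κ' f k).symm.trans
        (congrFun (hz 1 k) _)) hκ
  exact (hrows κ).trans hcols

end TwoParam

open TwoParam in
theorem statement18_general (R : Type*) [CommRing R]
    (f : Mon → R) (hf : FinDeg f) :
    IsQSym f ↔ ∀ (a : Fin 2) (k : ℕ), zeroF a k f = f :=
  ⟨IsQSym.zeroF_eq, isQSym_of_zeroF_eq hf⟩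

open TwoParam in
/-- a finite-degree power series is two-parameter
quasisymmetric iff it is fixed by all free zero insertions. -/
theorem statement18 (R : Type*) [CommRing R] [IsDomain R]
    (f : Mon → R) (hf : FinDeg f) :
    IsQSym f ↔ ∀ (a : Fin 2) (k : ℕ), zeroF a k f = f :=
  statement18_general R f hf
end
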